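/- arXiv:2410.19625 — 11 statements merged into one kernel-verified Lean document; each statement's English description precedes it below -/
import Mathlib

section
/- Let · be a partial action of H on R, let g ∈ H be a grouplike element and let x ∈ H be a (1,g)-primitive element. If g·1_R = 1_R, then x·1_R = 0 and both g and x act globally, i.e. g·(h·r) = (gh)·r and x·(h·r) = (xh)·r for all h ∈ H and r ∈ R. -/
open TensorProduct

noncomputable section

/-- Gaussian ($q$-)binomial coefficients, defined by the recursion
`binom(0,0)_q = 1`, `binom(n,m)_q = 0` for `m > n`,
`binom(n,m)_q = binom(n-1,m)_q + q^(n-m) * binom(n-1,m-1)_q`. -/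
def qbinom {K : Type*} [CommRing K] (q : K) : ℕ → ℕ → K
  | 0, 0 => 1
  | 0, _ + 1 => 0
  | n + 1, 0 => qbinom q n 0
  | n + 1, m + 1 => qbinom q n (m + 1) + q ^ (n - m) * qbinom q n m

/-- A (left) partial action of a bialgebra `H` on an algebra `R`:
(PA.1) `1 · r = r`; (PA.2) `h · (r*s) = Σ (h₁ · r)(h₂ · s)`;
(PA.3) `h · (m · r) = Σ (h₁ · 1)(h₂m · r)`. -/
structure PartialAction (k H R : Type*) [CommSemiring k] [Semiring H] [Bialgebra k H]
    [Semiring R] [Algebra k R] where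
  act : H →ₗ[k] R →ₗ[k] R
  unit_act : ∀ r : R, act 1 r = r
  mul_act : ∀ (h : H) (r s : R),
    act h (r * s) = TensorProduct.lift
      ((LinearMap.mul k R).compl₁₂ (act.flip r) (act.flip s)) (Coalgebra.comul (R := k) h)
  act_act : ∀ (h m : H) (r : R),
    act h (act m r) = TensorProduct.lift
      ((LinearMap.mul k R).compl₁₂ (act.flip 1)
        ((act.flip r).comp (LinearMap.mulRight k m))) (Coalgebra.comul (R := k) h)

/-- Symmetry (PA.S): `h · (m · r) = Σ (h₁m · r)(h₂ · 1)`. -/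
def PartialAction.IsSymmetric {k H R : Type*} [CommSemiring k] [Semiring H] [Bialgebra k H]
    [Semiring R] [Algebra k R] (P : PartialAction k H R) : Prop :=
  ∀ (h m : H) (r : R),
    P.act h (P.act m r) = TensorProduct.lift
      ((LinearMap.mul k R).compl₁₂ ((P.act.flip r).comp (LinearMap.mulRight k m))
        (P.act.flip 1)) (Coalgebra.comul (R := k) h)

/-- A grouplike element: `Δ g = g ⊗ g` and `ε g = 1`. -/
def IsGrouplike (k : Type*) {H : Type*} [CommSemiring k] [Semiring H] [Bialgebra k H]
    (g : H) : Prop :=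
  Coalgebra.comul (R := k) g = g ⊗ₜ[k] g ∧ Coalgebra.counit (R := k) g = 1

/-- A `(1,g)`-primitive element: `Δ x = x ⊗ 1 + g ⊗ x`. -/
def IsOneGPrimitive (k : Type*) {H : Type*} [CommSemiring k] [Semiring H] [Bialgebra k H]
    (g x : H) : Prop :=
  Coalgebra.comul (R := k) x = x ⊗ₜ[k] (1 : H) + g ⊗ₜ[k] x

end

/-- Lemma 2.3: if `g · 1_R = 1_R`, then `x · 1_R = 0` and both `g` and `x`
act globally. -/
theorem stmt0 {k H R : Type*} [Field k] [IsAlgClosed k] [CharZero k]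
    [Ring H] [HopfAlgebra k H] [Ring R] [Algebra k R]
    (P : PartialAction k H R) (g x : H)
    (hg : IsGrouplike k g) (hx : IsOneGPrimitive k g x)
    (hg1 : P.act g 1 = 1) :
    P.act x 1 = 0 ∧
      (∀ (h : H) (r : R), P.act g (P.act h r) = P.act (g * h) r) ∧
      (∀ (h : H) (r : R), P.act x (P.act h r) = P.act (x * h) r) := by
  have hx1 : P.act x 1 = 0 := by
    have h0 := P.mul_act x 1 1
    rw [hx] at h0
    simp only [mul_one, map_add, TensorProduct.lift.tmul, LinearMap.compl₁₂_apply,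
      LinearMap.flip_apply, LinearMap.mul_apply', P.unit_act, hg1, one_mul] at h0
    exact left_eq_add.mp h0
  refine ⟨hx1, ?_, ?_⟩
  · intro h r
    have h0 := P.act_act g h r
    rw [hg.1] at h0
    simpa only [TensorProduct.lift.tmul, LinearMap.compl₁₂_apply, LinearMap.flip_apply,
      LinearMap.mul_apply', LinearMap.comp_apply, LinearMap.mulRight_apply, hg1, one_mul] using h0
  · intro h r
    have h0 := P.act_act x h r
    rw [hx] at h0
    simpa only [map_add, TensorProduct.lift.tmul, LinearMap.compl₁₂_apply, LinearMap.flip_apply,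
      LinearMap.mul_apply', LinearMap.comp_apply, LinearMap.mulRight_apply, hg1, hx1, one_mul,
      zero_mul, zero_add] using h0
end

section
/- Let · be a partial action of H on R, let g ∈ H be a grouplike element and let x ∈ H be a (1,g)-primitive element such that xg = q·gx for some q ∈ k^×. If g·1_R = 0, then x·r = (x·1_R)·r and (g⁻¹x)·r = −q·r·(x·1_R) for all r ∈ R. -/
open TensorProduct

section Aux

variable {k H R : Type*} [CommSemiring k] [Semiring H] [Bialgebra k H]
    [Semiring R] [Algebra k R]

/-- PA.2 specialized to `Δ h = a ⊗ b`. -/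
lemma pa_mul_tmul (P : PartialAction k H R) {h a b : H}
    (hc : Coalgebra.comul (R := k) h = a ⊗ₜ[k] b) (r s : R) :
    P.act h (r * s) = P.act a r * P.act b s := by
  rw [P.mul_act, hc, TensorProduct.lift.tmul]
  simp [LinearMap.compl₁₂_apply]

/-- PA.3 specialized to `Δ h = a ⊗ b`. -/
lemma pa_act_tmul (P : PartialAction k H R) {h a b : H}
    (hc : Coalgebra.comul (R := k) h = a ⊗ₜ[k] b) (m : H) (r : R) :
    P.act h (P.act m r) = P.act a 1 * P.act (b * m) r := by
  rw [P.act_act, hc, TensorProduct.lift.tmul]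
  simp [LinearMap.compl₁₂_apply]

/-- PA.2 specialized to `Δ h = a ⊗ b + c ⊗ d`. -/
lemma pa_mul_tmul₂ (P : PartialAction k H R) {h a b c d : H}
    (hc : Coalgebra.comul (R := k) h = a ⊗ₜ[k] b + c ⊗ₜ[k] d) (r s : R) :
    P.act h (r * s) = P.act a r * P.act b s + P.act c r * P.act d s := by
  rw [P.mul_act, hc, map_add, TensorProduct.lift.tmul, TensorProduct.lift.tmul]
  simp [LinearMap.compl₁₂_apply]

/-- PA.3 specialized to `Δ h = a ⊗ b + c ⊗ d`. -/
lemma pa_act_tmul₂ (P : PartialAction k H R) {h a b c d : H}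
    (hc : Coalgebra.comul (R := k) h = a ⊗ₜ[k] b + c ⊗ₜ[k] d) (m : H) (r : R) :
    P.act h (P.act m r) = P.act a 1 * P.act (b * m) r + P.act c 1 * P.act (d * m) r := by
  rw [P.act_act, hc, map_add, TensorProduct.lift.tmul, TensorProduct.lift.tmul]
  simp [LinearMap.compl₁₂_apply]

end Aux

section AuxHopf

variable {k H : Type*} [CommSemiring k] [Semiring H] [HopfAlgebra k H]

lemma antipode_mul_self_of_grouplike {g : H} (hg : IsGrouplike k g) :
    HopfAlgebra.antipode (R := k) g * g = 1 := by
  have h := HopfAlgebra.mul_antipode_rTensor_comul_apply (R := k) g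
  rw [hg.1, hg.2] at h
  simpa using h

lemma self_mul_antipode_of_grouplike {g : H} (hg : IsGrouplike k g) :
    g * HopfAlgebra.antipode (R := k) g = 1 := by
  have h := HopfAlgebra.mul_antipode_lTensor_comul_apply (R := k) g
  rw [hg.1, hg.2] at h
  simpa using h

lemma comul_antipode_of_grouplike {g : H} (hg : IsGrouplike k g) :
    Coalgebra.comul (R := k) (HopfAlgebra.antipode (R := k) g) =
      HopfAlgebra.antipode (R := k) g ⊗ₜ[k] HopfAlgebra.antipode (R := k) g := by
  set S := HopfAlgebra.antipode (R := k) g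
  have h1 : S * g = 1 := antipode_mul_self_of_grouplike hg
  have h2 : g * S = 1 := self_mul_antipode_of_grouplike hg
  have hba : Coalgebra.comul (R := k) S * Coalgebra.comul (R := k) g = 1 := by
    rw [← Bialgebra.comul_mul, h1, Bialgebra.comul_one]
  have hac : Coalgebra.comul (R := k) g * (S ⊗ₜ[k] S) = 1 := by
    rw [hg.1, Algebra.TensorProduct.tmul_mul_tmul, h2, Algebra.TensorProduct.one_def]
  calc Coalgebra.comul (R := k) S
      = Coalgebra.comul (R := k) S * (Coalgebra.comul (R := k) g * (S ⊗ₜ[k] S)) := by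
        rw [hac, mul_one]
    _ = (Coalgebra.comul (R := k) S * Coalgebra.comul (R := k) g) * (S ⊗ₜ[k] S) := by
        rw [mul_assoc]
    _ = S ⊗ₜ[k] S := by rw [hba, one_mul]

end AuxHopf

/-- Lemma 2.4(i): if `g · 1_R = 0`, then `x · r = (x · 1_R) r` and
`(g⁻¹x) · r = -q r (x · 1_R)`, where `g⁻¹ = S(g)`. -/
theorem stmt1 {k H R : Type*} [Field k] [IsAlgClosed k] [CharZero k]
    [Ring H] [HopfAlgebra k H] [Ring R] [Algebra k R]
    (P : PartialAction k H R) (g x : H)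
    (hg : IsGrouplike k g) (hx : IsOneGPrimitive k g x)
    (q : k) (hq : q ≠ 0) (hxg : x * g = q • (g * x))
    (hg0 : P.act g 1 = 0) :
    ∀ r : R, P.act x r = P.act x 1 * r ∧
      P.act (HopfAlgebra.antipode (R := k) g * x) r = -(q • (r * P.act x 1)) := by
  set Sg := HopfAlgebra.antipode (R := k) g with hSgdef
  have hx' : Coalgebra.comul (R := k) x = x ⊗ₜ[k] (1 : H) + g ⊗ₜ[k] x := hx
  have hSgg : Sg * g = 1 := antipode_mul_self_of_grouplike hg
  have hcomSg : Coalgebra.comul (R := k) Sg = Sg ⊗ₜ[k] Sg := comul_antipode_of_grouplike hg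
  -- g · r = 0 for all r
  have hgr : ∀ r : R, P.act g r = 0 := by
    intro r
    have h := pa_mul_tmul P hg.1 r 1
    rw [mul_one, hg0, mul_zero] at h
    exact h
  -- S(g) · 1 = 0
  have hSg0 : P.act Sg 1 = 0 := by
    have h := pa_act_tmul P hcomSg g 1
    rw [hgr 1, map_zero, hSgg, P.unit_act, mul_one] at h
    exact h.symm
  -- x · r = (x · 1) r
  have hxr : ∀ r : R, P.act x r = P.act x 1 * r := by
    intro r
    have h := pa_mul_tmul₂ P hx' 1 r
    rw [one_mul, P.unit_act, hg0, zero_mul, add_zero] at h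
    exact h
  -- comul (Sg * x) = (Sg * x) ⊗ Sg + 1 ⊗ (Sg * x)
  have hcomy : Coalgebra.comul (R := k) (Sg * x) =
      (Sg * x) ⊗ₜ[k] Sg + (1 : H) ⊗ₜ[k] (Sg * x) := by
    rw [Bialgebra.comul_mul, hcomSg, hx', mul_add, Algebra.TensorProduct.tmul_mul_tmul,
      Algebra.TensorProduct.tmul_mul_tmul, mul_one, hSgg]
  -- (Sg * x) * g = q • x
  have hyg : (Sg * x) * g = q • x := by
    rw [mul_assoc, hxg, mul_smul_comm, ← mul_assoc, hSgg, one_mul]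
  -- (Sg * x) · 1 * r + q • (x · 1 * r) = 0
  have hkey : ∀ r : R, P.act (Sg * x) 1 * r + q • (P.act x 1 * r) = 0 := by
    intro r
    have h := pa_act_tmul₂ P hcomy g r
    rw [hgr r, map_zero, hSgg, P.unit_act, hyg, P.unit_act] at h
    rw [map_smul, LinearMap.smul_apply, hxr r, one_mul] at h
    exact h.symm
  -- (Sg * x) · 1 = -(q • (x · 1))
  have hy1 : P.act (Sg * x) 1 = -(q • P.act x 1) := by
    have h := hkey 1
    rw [mul_one, mul_one] at h
    exact eq_neg_of_add_eq_zero_left h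
  intro r
  refine ⟨hxr r, ?_⟩
  have h := pa_mul_tmul₂ P hcomy r 1
  rw [mul_one, hSg0, mul_zero, zero_add, P.unit_act, hy1] at h
  rw [h, mul_neg, mul_smul_comm]
end

section
/- Let · be a partial action of H on R, let g ∈ H be a grouplike element with g² = 1 and let x ∈ H be a (1,g)-primitive element with x² = 0 and xg = −gx. If g·1_R = 0, then (x·1_R)² ∈ Z(R). -/
open TensorProduct

/-!
Write `a = x · 1`. Since `g · 1 = 0`, (PA.3) makes `x` act as left multiplication by `a`.
The element `y = g x` is `(g,1)`-primitive; (PA.3) applied to `y · (g · 1) = 0` gives `y · 1 = a`,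
and then (PA.2) makes `y` act as right multiplication by `a`. Finally `y² = -x² = 0`, so (PA.3)
applied to `y · (y · r)` gives `r a² = a · (x · r) = a² r`.
-/

namespace PartialAction

variable {k H R : Type*} [CommSemiring k] [Semiring H] [Bialgebra k H] [Semiring R] [Algebra k R]
  (P : PartialAction k H R)

theorem act_act_of_comul_eq {h h₁ h₂ h₁' h₂' : H}
    (hΔ : Coalgebra.comul (R := k) h = h₁ ⊗ₜ h₂ + h₁' ⊗ₜ h₂') (m : H) (r : R) :
    P.act h (P.act m r) = P.act h₁ 1 * P.act (h₂ * m) r + P.act h₁' 1 * P.act (h₂' * m) r := by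
  simp [P.act_act, hΔ]

theorem act_mul_of_comul_eq {h h₁ h₂ h₁' h₂' : H}
    (hΔ : Coalgebra.comul (R := k) h = h₁ ⊗ₜ h₂ + h₁' ⊗ₜ h₂') (r s : R) :
    P.act h (r * s) = P.act h₁ r * P.act h₂ s + P.act h₁' r * P.act h₂' s := by
  simp [P.mul_act, hΔ]

theorem act_eq_act_one_mul_of_isOneGPrimitive {g x : H} (hx : IsOneGPrimitive k g x)
    (hg0 : P.act g 1 = 0) (r : R) : P.act x r = P.act x 1 * r := by
  simpa [P.unit_act, hg0] using P.act_act_of_comul_eq hx 1 r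

theorem act_eq_mul_act_one_of_comul_eq {g y : H}
    (hy : Coalgebra.comul (R := k) y = y ⊗ₜ g + 1 ⊗ₜ y) (hg0 : P.act g 1 = 0) (r : R) :
    P.act y r = r * P.act y 1 := by
  simpa [P.unit_act, hg0] using P.act_mul_of_comul_eq hy r 1

end PartialAction

theorem comul_mul_of_comul_eq_tmul_self_of_isOneGPrimitive {k H : Type*} [CommSemiring k]
    [Semiring H] [Bialgebra k H] {g x : H} (hg : Coalgebra.comul (R := k) g = g ⊗ₜ g)
    (hx : IsOneGPrimitive k g x) :
    Coalgebra.comul (R := k) (g * x) = (g * x) ⊗ₜ g + (g * g) ⊗ₜ (g * x) := by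
  rw [Bialgebra.comul_mul, hg, hx, mul_add, Algebra.TensorProduct.tmul_mul_tmul,
    Algebra.TensorProduct.tmul_mul_tmul, mul_one]

theorem stmt2_general {k H R : Type*} [Field k]
    [Ring H] [HopfAlgebra k H] [Ring R] [Algebra k R]
    (P : PartialAction k H R) (g x : H)
    (hg : IsGrouplike k g) (hx : IsOneGPrimitive k g x)
    (hg2 : g ^ 2 = 1) (hx2 : x ^ 2 = 0) (hxg : x * g = -(g * x))
    (hg0 : P.act g 1 = 0) :
    (P.act x 1) ^ 2 ∈ Set.center R := by
  have hgg : g * g = 1 := by rw [← sq, hg2]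
  have hΔy : Coalgebra.comul (R := k) (g * x) = (g * x) ⊗ₜ g + 1 ⊗ₜ (g * x) := by
    rw [comul_mul_of_comul_eq_tmul_self_of_isOneGPrimitive hg.1 hx, hgg]
  have hyg : g * x * g = -x := by rw [mul_assoc, hxg, mul_neg, ← mul_assoc, hgg, one_mul]
  have hyy : g * x * (g * x) = 0 := by
    rw [← mul_assoc, hyg, neg_mul, ← sq, hx2, neg_zero]
  have hy1 : P.act (g * x) 1 = P.act x 1 := by
    have h := P.act_act_of_comul_eq hΔy g 1
    rw [hgg, hyg, hg0, map_zero, P.unit_act, map_neg, LinearMap.neg_apply,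
      mul_one, one_mul, ← sub_eq_add_neg] at h
    exact sub_eq_zero.mp h.symm
  have hyr := P.act_eq_mul_act_one_of_comul_eq hΔy hg0
  have hxr := P.act_eq_act_one_mul_of_isOneGPrimitive hx hg0
  refine Semigroup.mem_center_iff.mpr fun r => ?_
  have h := P.act_act_of_comul_eq hΔy (g * x) r
  rw [hyr, hyr, hy1, ← mul_assoc g, hgg, one_mul, hxr r, hyy, map_zero, P.unit_act] at h
  simpa [sq, mul_assoc] using h

/-- Lemma 2.4(ii): if `g² = 1`, `x² = 0`, `xg = -gx` and `g · 1_R = 0`,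
then `(x · 1_R)² ∈ Z(R)`. -/
theorem stmt2 {k H R : Type*} [Field k] [IsAlgClosed k] [CharZero k]
    [Ring H] [HopfAlgebra k H] [Ring R] [Algebra k R]
    (P : PartialAction k H R) (g x : H)
    (hg : IsGrouplike k g) (hx : IsOneGPrimitive k g x)
    (hg2 : g ^ 2 = 1) (hx2 : x ^ 2 = 0) (hxg : x * g = -(g * x))
    (hg0 : P.act g 1 = 0) :
    (P.act x 1) ^ 2 ∈ Set.center R :=
  stmt2_general P g x hg hx hg2 hx2 hxg hg0
end

section
/- Let · be a partial action of H on R, let g ∈ H be a grouplike element with g² = 1, and let x, y ∈ H be (1,g)-primitive elements with xg = −gx and yg = −gy. If g·1_R = 0, then for all r ∈ R: (gxy)·r = (y·1_R)·r·(x·1_R) − (x·1_R)·r·(y·1_R), and (xy)·r = (x·1_R)(y·1_R)·r − r·(y·1_R)(x·1_R). -/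
open TensorProduct

/-- from the proof of Lemma 2.5: if `g² = 1`, `xg = -gx`, `yg = -gy` and
`g · 1_R = 0`, then `(gxy) · r = (y·1)r(x·1) - (x·1)r(y·1)` and
`(xy) · r = (x·1)(y·1)r - r(y·1)(x·1)`. -/
theorem stmt3 {k H R : Type*} [Field k] [IsAlgClosed k] [CharZero k]
    [Ring H] [HopfAlgebra k H] [Ring R] [Algebra k R]
    (P : PartialAction k H R) (g x y : H)
    (hg : IsGrouplike k g) (hx : IsOneGPrimitive k g x) (hy : IsOneGPrimitive k g y)
    (hg2 : g ^ 2 = 1) (hxg : x * g = -(g * x)) (hyg : y * g = -(g * y))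
    (hg0 : P.act g 1 = 0) :
    ∀ r : R,
      P.act (g * (x * y)) r = P.act y 1 * r * P.act x 1 - P.act x 1 * r * P.act y 1 ∧
      P.act (x * y) r = P.act x 1 * P.act y 1 * r - r * (P.act y 1 * P.act x 1) := by
  classical
  obtain ⟨hcg, -⟩ := hg
  have hgg : g * g = 1 := by rw [← pow_two]; exact hg2
  have hgxg : g * x * g = -x := by
    rw [mul_assoc, hxg, mul_neg, ← mul_assoc, hgg, one_mul]
  have hgyg : g * y * g = -y := by
    rw [mul_assoc, hyg, mul_neg, ← mul_assoc, hgg, one_mul]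
  have hcgx : Coalgebra.comul (R := k) (g * x)
      = (g * x) ⊗ₜ[k] g + 1 ⊗ₜ[k] (g * x) := by
    rw [Bialgebra.comul_mul, hcg, hx, mul_add, Algebra.TensorProduct.tmul_mul_tmul,
      Algebra.TensorProduct.tmul_mul_tmul, mul_one, hgg]
  have hcgy : Coalgebra.comul (R := k) (g * y)
      = (g * y) ⊗ₜ[k] g + 1 ⊗ₜ[k] (g * y) := by
    rw [Bialgebra.comul_mul, hcg, hy, mul_add, Algebra.TensorProduct.tmul_mul_tmul,
      Algebra.TensorProduct.tmul_mul_tmul, mul_one, hgg]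
  -- g acts as zero
  have hgr : ∀ r : R, P.act g r = 0 := by
    intro r
    have h1 := P.mul_act g r 1
    rw [mul_one, hcg] at h1
    simpa [hg0] using h1
  -- x and y act by left multiplication by x·1, y·1
  have hxr : ∀ r : R, P.act x r = P.act x 1 * r := by
    intro r
    have h1 := P.mul_act x 1 r
    rw [one_mul, hx] at h1
    simpa [P.unit_act, hg0] using h1
  have hyr : ∀ r : R, P.act y r = P.act y 1 * r := by
    intro r
    have h1 := P.mul_act y 1 r
    rw [one_mul, hy] at h1
    simpa [P.unit_act, hg0] using h1
  -- (gx)·1 = x·1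
  have hfx : P.act (g * x) 1 = P.act x 1 := by
    have h1 := P.act_act (g * x) g (1 : R)
    rw [hgr 1, hcgx, map_zero] at h1
    simp only [map_add, TensorProduct.lift.tmul, LinearMap.compl₁₂_apply,
      LinearMap.coe_comp, Function.comp_apply, LinearMap.mulRight_apply,
      LinearMap.flip_apply, LinearMap.mul_apply', hgg, hgxg, one_mul,
      P.unit_act, map_neg, LinearMap.neg_apply] at h1
    rw [hxr 1] at h1
    linear_combination (norm := noncomm_ring) h1.symm
  have hfy : P.act (g * y) 1 = P.act y 1 := by
    have h1 := P.act_act (g * y) g (1 : R)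
    rw [hgr 1, hcgy, map_zero] at h1
    simp only [map_add, TensorProduct.lift.tmul, LinearMap.compl₁₂_apply,
      LinearMap.coe_comp, Function.comp_apply, LinearMap.mulRight_apply,
      LinearMap.flip_apply, LinearMap.mul_apply', hgg, hgyg, one_mul,
      P.unit_act, map_neg, LinearMap.neg_apply] at h1
    rw [hyr 1] at h1
    linear_combination (norm := noncomm_ring) h1.symm
  -- gx, gy act by right multiplication
  have hgxr : ∀ r : R, P.act (g * x) r = r * P.act x 1 := by
    intro r
    have h1 := P.mul_act (g * x) r 1
    rw [mul_one, hcgx] at h1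
    simpa [P.unit_act, hgr, hfx] using h1
  have hgyr : ∀ r : R, P.act (g * y) r = r * P.act y 1 := by
    intro r
    have h1 := P.mul_act (g * y) r 1
    rw [mul_one, hcgy] at h1
    simpa [P.unit_act, hgr, hfy] using h1
  intro r
  constructor
  · -- (gxy) · r
    have h1 := P.act_act (g * x) y r
    rw [hcgx] at h1
    simp only [map_add, TensorProduct.lift.tmul, LinearMap.compl₁₂_apply,
      LinearMap.coe_comp, Function.comp_apply, LinearMap.mulRight_apply,
      LinearMap.flip_apply, LinearMap.mul_apply', one_mul, P.unit_act] at h1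
    rw [hyr r, hgxr (P.act y 1 * r), hgyr r, mul_assoc g x y, hfx] at h1
    linear_combination (norm := noncomm_ring) -h1
  · -- (xy) · r
    have h1 := P.act_act (g * x) (g * y) r
    rw [hcgx] at h1
    have e1 : g * (g * y) = y := by rw [← mul_assoc, hgg, one_mul]
    have e2 : g * x * (g * y) = -(x * y) := by
      rw [← mul_assoc, hgxg, neg_mul]
    simp only [map_add, TensorProduct.lift.tmul, LinearMap.compl₁₂_apply,
      LinearMap.coe_comp, Function.comp_apply, LinearMap.mulRight_apply,
      LinearMap.flip_apply, LinearMap.mul_apply', one_mul, P.unit_act, e1, e2,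
      map_neg, LinearMap.neg_apply] at h1
    rw [hgyr r, hgxr (r * P.act y 1), hyr r, hfx] at h1
    linear_combination (norm := noncomm_ring) h1
end

section
/- Let · be a partial action of H on R, let g ∈ H be a grouplike element with g² = 1, and let x, y ∈ H be (1,g)-primitive elements with xg = −gx and yg = −gy. If g·1_R = 0 and both x·1_R and y·1_R lie in Z(R), then (xy)·r = 0 and (gxy)·r = 0 for all r ∈ R. -/
open TensorProduct

/-- Lemma 2.5(i): if moreover `x · 1_R, y · 1_R ∈ Z(R)`, then
`(xy) · r = 0` and `(gxy) · r = 0`. -/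
theorem stmt4 {k H R : Type*} [Field k] [IsAlgClosed k] [CharZero k]
    [Ring H] [HopfAlgebra k H] [Ring R] [Algebra k R]
    (P : PartialAction k H R) (g x y : H)
    (hg : IsGrouplike k g) (hx : IsOneGPrimitive k g x) (hy : IsOneGPrimitive k g y)
    (hg2 : g ^ 2 = 1) (hxg : x * g = -(g * x)) (hyg : y * g = -(g * y))
    (hg0 : P.act g 1 = 0)
    (hxZ : P.act x 1 ∈ Set.center R) (hyZ : P.act y 1 ∈ Set.center R) :
    ∀ r : R, P.act (x * y) r = 0 ∧ P.act (g * (x * y)) r = 0 := by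
  obtain ⟨hgc, -⟩ := hg
  have hgg : g * g = 1 := by rw [← pow_two]; exact hg2
  have hxc : ∀ b : R, b * P.act x 1 = P.act x 1 * b := fun b =>
    Semigroup.mem_center_iff.mp hxZ b
  have hyc : ∀ b : R, b * P.act y 1 = P.act y 1 * b := fun b =>
    Semigroup.mem_center_iff.mp hyZ b
  have ev : ∀ (f₁ f₂ : H →ₗ[k] R) (a b : H),
      TensorProduct.lift ((LinearMap.mul k R).compl₁₂ f₁ f₂) (a ⊗ₜ[k] b) = f₁ a * f₂ b := by
    intro f₁ f₂ a b; simp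
  -- comultiplication of g*x and g*y
  have hcgx : Coalgebra.comul (R := k) (g * x)
      = (g * x) ⊗ₜ[k] g + (1 : H) ⊗ₜ[k] (g * x) := by
    rw [Bialgebra.comul_mul, hgc, hx, mul_add, Algebra.TensorProduct.tmul_mul_tmul,
      Algebra.TensorProduct.tmul_mul_tmul, mul_one, hgg]
  have hcgy : Coalgebra.comul (R := k) (g * y)
      = (g * y) ⊗ₜ[k] g + (1 : H) ⊗ₜ[k] (g * y) := by
    rw [Bialgebra.comul_mul, hgc, hy, mul_add, Algebra.TensorProduct.tmul_mul_tmul,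
      Algebra.TensorProduct.tmul_mul_tmul, mul_one, hgg]
  -- algebraic identities in H
  have hgxg : (g * x) * g = -x := by
    rw [mul_assoc, hxg, mul_neg, ← mul_assoc, hgg, one_mul]
  have hgyg : (g * y) * g = -y := by
    rw [mul_assoc, hyg, mul_neg, ← mul_assoc, hgg, one_mul]
  have hgxgy : (g * x) * (g * y) = -(x * y) := by
    rw [← mul_assoc, hgxg, neg_mul]
  -- g acts as zero everywhere
  have hgr : ∀ r : R, P.act g r = 0 := by
    intro r
    have h1 := P.act_act g 1 r
    rw [P.unit_act, hgc, ev] at h1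
    simpa [hg0] using h1
  -- x acts by left multiplication by x·1, same for y
  have hxr : ∀ r : R, P.act x r = P.act x 1 * r := by
    intro r
    have h1 := P.mul_act x 1 r
    rw [hx, map_add, ev, ev, one_mul] at h1
    simpa [P.unit_act, hgr] using h1
  have hyr : ∀ r : R, P.act y r = P.act y 1 * r := by
    intro r
    have h1 := P.mul_act y 1 r
    rw [hy, map_add, ev, ev, one_mul] at h1
    simpa [P.unit_act, hgr] using h1
  -- g*x acts by right multiplication by (g*x)·1, same for g*y
  have hgxr : ∀ r : R, P.act (g * x) r = r * P.act (g * x) 1 := by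
    intro r
    have h1 := P.mul_act (g * x) r 1
    rw [hcgx, map_add, ev, ev, mul_one] at h1
    simpa [P.unit_act, hgr] using h1
  have hgyr : ∀ r : R, P.act (g * y) r = r * P.act (g * y) 1 := by
    intro r
    have h1 := P.mul_act (g * y) r 1
    rw [hcgy, map_add, ev, ev, mul_one] at h1
    simpa [P.unit_act, hgr] using h1
  -- (g*x)·1 = x·1, (g*y)·1 = y·1
  have hgx1 : P.act (g * x) 1 = P.act x 1 := by
    have h1 := P.act_act (g * x) g (1 : R)
    rw [hcgx, map_add, ev, ev] at h1
    simp only [LinearMap.flip_apply, LinearMap.coe_comp, Function.comp_apply,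
      LinearMap.mulRight_apply, hgg, hgxg, one_mul, P.unit_act, mul_one,
      map_neg, LinearMap.neg_apply] at h1
    rw [hgr 1, map_zero] at h1
    have h2 := h1.symm
    rw [add_neg_eq_zero] at h2
    exact h2
  have hgy1 : P.act (g * y) 1 = P.act y 1 := by
    have h1 := P.act_act (g * y) g (1 : R)
    rw [hcgy, map_add, ev, ev] at h1
    simp only [LinearMap.flip_apply, LinearMap.coe_comp, Function.comp_apply,
      LinearMap.mulRight_apply, hgg, hgyg, one_mul, P.unit_act, mul_one,
      map_neg, LinearMap.neg_apply] at h1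
    rw [hgr 1, map_zero] at h1
    have h2 := h1.symm
    rw [add_neg_eq_zero] at h2
    exact h2
  intro r
  constructor
  · -- (x*y)·r = 0
    have h1 := P.act_act (g * x) (g * y) r
    rw [hcgx, map_add, ev, ev] at h1
    simp only [LinearMap.flip_apply, LinearMap.coe_comp, Function.comp_apply,
      LinearMap.mulRight_apply, hgxgy, one_mul, P.unit_act,
      map_neg, LinearMap.neg_apply, ← mul_assoc g g y, hgg] at h1
    rw [hgyr r, hgxr, hgx1, hgy1, hyr r] at h1
    -- h1 : r * (y·1) * (x·1) = (x·1) * ((y·1) * r) + -((x*y)·r)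
    have hc : r * P.act y 1 * P.act x 1 = P.act x 1 * (P.act y 1 * r) := by
      rw [hxc (r * P.act y 1), hyc r]
    rw [hc, left_eq_add, neg_eq_zero] at h1
    exact h1
  · -- (g*(x*y))·r = 0
    have h1 := P.act_act (g * x) y r
    rw [hcgx, map_add, ev, ev] at h1
    simp only [LinearMap.flip_apply, LinearMap.coe_comp, Function.comp_apply,
      LinearMap.mulRight_apply, one_mul, P.unit_act, mul_assoc g x y] at h1
    rw [hyr r, hgxr, hgx1, hgyr r, hgy1] at h1
    -- h1 : (y·1) * r * (x·1) = (x·1) * (r * (y·1)) + (g*(x*y))·r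
    have hc : P.act y 1 * r * P.act x 1 = P.act x 1 * (r * P.act y 1) := by
      rw [hxc (P.act y 1 * r), hyc r]
    rw [hc, left_eq_add] at h1
    exact h1
end

section
/- Let · be a partial action of H on R, let g ∈ H be a grouplike element with g² = 1, and let x ∈ H be a (1,g)-primitive element with xg = −gx. If h ∈ H and r ∈ R satisfy h·r = 0 and (gh)·r = 0, then (xh)·r = 0 and (gxh)·r = 0. -/
open TensorProduct

/-- Lemma 2.5(ii): if `h · r = 0` and `(gh) · r = 0`, then `(xh) · r = 0`
and `(gxh) · r = 0`. -/
theorem stmt5 {k H R : Type*} [Field k] [IsAlgClosed k] [CharZero k]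
    [Ring H] [HopfAlgebra k H] [Ring R] [Algebra k R]
    (P : PartialAction k H R) (g x : H)
    (hg : IsGrouplike k g) (hx : IsOneGPrimitive k g x)
    (hg2 : g ^ 2 = 1) (hxg : x * g = -(g * x))
    (h : H) (r : R) (hh : P.act h r = 0) (hgh : P.act (g * h) r = 0) :
    P.act (x * h) r = 0 ∧ P.act (g * (x * h)) r = 0 := by
  obtain ⟨hgc, hge⟩ := hg
  have hgg : g * g = 1 := by rw [← pow_two]; exact hg2
  have hcgx : Coalgebra.comul (R := k) (g * x) =
      (g * x) ⊗ₜ[k] g + (1 : H) ⊗ₜ[k] (g * x) := by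
    rw [Bialgebra.comul_mul, hgc, hx]
    rw [mul_add, Algebra.TensorProduct.tmul_mul_tmul, Algebra.TensorProduct.tmul_mul_tmul,
      mul_one, hgg]
  have key : ∀ m : H, P.act (g * x) (P.act m r) =
      P.act (g * x) 1 * P.act (g * m) r + P.act ((g * x) * m) r := by
    intro m
    rw [P.act_act, hcgx, map_add, TensorProduct.lift.tmul, TensorProduct.lift.tmul]
    simp [LinearMap.compl₁₂_apply, LinearMap.mul_apply', P.unit_act]
  have e1 := key h
  rw [hh, map_zero, hgh, mul_zero, zero_add, mul_assoc] at e1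
  have e2 := key (g * h)
  rw [hgh, map_zero, ← mul_assoc, hgg, one_mul, hh, mul_zero, zero_add] at e2
  have hprod : (g * x) * (g * h) = -(x * h) := by
    have : g * x * (g * h) = g * (x * g) * h := by noncomm_ring
    rw [this, hxg]
    rw [show g * -(g * x) * h = -(g * g * (x * h)) by noncomm_ring, hgg, one_mul]
  rw [hprod, map_neg, LinearMap.neg_apply] at e2
  exact ⟨neg_eq_zero.mp e2.symm, e1.symm⟩
end

section
/- Let · be a partial action of H on R, let g ∈ H be a grouplike element and let x ∈ H be a (1,g)-primitive element such that gx = q⁻¹·xg for some q ∈ k^×. If g·1_R = 0, then for all a ∈ H and r ∈ R: (xa)·r = (x·1_R)·(a·r) − ((ga)·r)·(x·1_R). -/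
open TensorProduct

/-- case `j = 1` of Theorem 3.3: if `gx = q⁻¹ xg` and `g · 1_R = 0`, then
`(xa) · r = (x·1)(a·r) - ((ga)·r)(x·1)`. -/
theorem stmt6 {k H R : Type*} [Field k] [IsAlgClosed k] [CharZero k]
    [Ring H] [HopfAlgebra k H] [Ring R] [Algebra k R]
    (P : PartialAction k H R) (g x : H)
    (hg : IsGrouplike k g) (hx : IsOneGPrimitive k g x)
    (q : k) (hq : q ≠ 0) (hgx : g * x = q⁻¹ • (x * g))
    (hg0 : P.act g 1 = 0) :
    ∀ (a : H) (r : R),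
      P.act (x * a) r = P.act x 1 * P.act a r - P.act (g * a) r * P.act x 1 := by
  obtain ⟨hgc, hge⟩ := hg
  set c : H := HopfAlgebra.antipode (R := k) g with hc
  have hcg : c * g = 1 := by
    have := HopfAlgebra.mul_antipode_rTensor_comul_apply (R := k) (a := g)
    rw [hgc, hge] at this
    simpa using this
  have hgc' : g * c = 1 := by
    have := HopfAlgebra.mul_antipode_lTensor_comul_apply (R := k) (a := g)
    rw [hgc, hge] at this
    simpa using this
  have hcc : Coalgebra.comul (R := k) c = c ⊗ₜ[k] c := by
    have h1 : Coalgebra.comul (R := k) (g * c) = (1 : H ⊗[k] H) := by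
      rw [hgc']; exact Bialgebra.comul_one
    rw [Bialgebra.comul_mul, hgc] at h1
    calc Coalgebra.comul (R := k) c
        = ((c ⊗ₜ[k] c) * (g ⊗ₜ[k] g)) * Coalgebra.comul (R := k) c := by
          rw [Algebra.TensorProduct.tmul_mul_tmul, hcg, ← Algebra.TensorProduct.one_def, one_mul]
      _ = (c ⊗ₜ[k] c) * ((g ⊗ₜ[k] g) * Coalgebra.comul (R := k) c) := by rw [mul_assoc]
      _ = (c ⊗ₜ[k] c) * 1 := by rw [h1]
      _ = c ⊗ₜ[k] c := mul_one _
  have hxcc : Coalgebra.comul (R := k) (x * c)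
      = (x * c) ⊗ₜ[k] c + (1 : H) ⊗ₜ[k] (x * c) := by
    rw [Bialgebra.comul_mul, hx, hcc, add_mul, Algebra.TensorProduct.tmul_mul_tmul,
      Algebra.TensorProduct.tmul_mul_tmul, one_mul, hgc']
  -- g · r = 0 for all r
  have hgr : ∀ r : R, P.act g r = 0 := by
    intro r
    have := P.act_act g 1 r
    rw [P.unit_act, hgc] at this
    simpa [hg0] using this
  -- c · 1 = 0
  have hc1 : P.act c 1 = 0 := by
    have := P.act_act c g 1
    rw [hg0, hcc] at this
    simp only [map_zero, TensorProduct.lift.tmul, LinearMap.compl₁₂_apply,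
      LinearMap.flip_apply, LinearMap.comp_apply, LinearMap.mulRight_apply,
      LinearMap.mul_apply', hcg, P.unit_act, mul_one] at this
    exact this.symm
  -- c · r = 0 for all r
  have hcr : ∀ r : R, P.act c r = 0 := by
    intro r
    have := P.act_act c 1 r
    rw [P.unit_act, hcc] at this
    simpa [hc1] using this
  -- (x*c) · 1 = - (x · 1)
  have hxc1 : P.act (x * c) 1 = - P.act x 1 := by
    have := P.act_act (x * c) g 1
    rw [hg0, hxcc] at this
    simp only [map_zero, map_add, TensorProduct.lift.tmul, LinearMap.compl₁₂_apply,
      LinearMap.flip_apply, LinearMap.comp_apply, LinearMap.mulRight_apply,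
      LinearMap.mul_apply', P.unit_act, one_mul, mul_assoc, hcg, mul_one] at this
    exact eq_neg_of_add_eq_zero_left this.symm
  -- (x*c) · t = - t * (x·1)
  have hxct : ∀ t : R, P.act (x * c) t = - (t * P.act x 1) := by
    intro t
    have := P.mul_act (x * c) t 1
    rw [mul_one, hxcc] at this
    simp only [map_add, TensorProduct.lift.tmul, LinearMap.compl₁₂_apply,
      LinearMap.flip_apply, LinearMap.mul_apply', hc1, hxc1, P.unit_act, mul_zero] at this
    rw [this]; simp [mul_neg]
  -- main computation
  intro a r
  have key := P.act_act (x * c) (g * a) r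
  rw [hxcc] at key
  simp only [map_add, TensorProduct.lift.tmul, LinearMap.compl₁₂_apply,
    LinearMap.flip_apply, LinearMap.comp_apply, LinearMap.mulRight_apply,
    LinearMap.mul_apply', P.unit_act, one_mul, hxc1] at key
  rw [hxct (P.act (g * a) r)] at key
  have e1 : c * (g * a) = a := by rw [← mul_assoc, hcg, one_mul]
  have e2 : x * c * (g * a) = x * a := by
    rw [mul_assoc, ← mul_assoc c, hcg, one_mul]
  rw [e1, e2] at key
  have h2 := eq_sub_of_add_eq' key.symm
  rw [h2, neg_mul, sub_neg_eq_add]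
  abel
end

section
/- Let · be a partial action of H on R, let g ∈ H be a grouplike element and let x ∈ H be a (1,g)-primitive element such that gx = q⁻¹·xg for some q ∈ k^×. If g·1_R = 0, then for all a ∈ H, r ∈ R and j ∈ ℕ₀: (x^j a)·r = Σ_{k=0}^{j} (−1)^k · q^{−k(k−1)/2} · binom(j,k)_{q⁻¹} · (x·1_R)^{j−k} · ((g^k a)·r) · (x·1_R)^k. -/
open TensorProduct

/-- The expression `D_j(a,r) = Σ_{i=0}^{j} (-1)^i q^{-i(i-1)/2} binom(j,i)_{q⁻¹}
w^{j-i} ((gⁱa) · r) wⁱ`. -/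
def Dfun {k A R : Type*} [Field k] [Ring A] [Algebra k A] [Ring R] [Algebra k R]
    (act : A →ₗ[k] R →ₗ[k] R) (g : A) (w : R) (q : k) (j : ℕ) (a : A) (r : R) : R :=
  ∑ i ∈ Finset.range (j + 1),
    ((-1 : k) ^ i * q⁻¹ ^ (i * (i - 1) / 2) * qbinom q⁻¹ j i) •
      (w ^ (j - i) * act (g ^ i * a) r * w ^ i)

/- ### Auxiliary lemmas -/

lemma qbinom_zero_right {K : Type*} [CommRing K] (q : K) : ∀ n, qbinom q n 0 = 1
  | 0 => rfl
  | n + 1 => by rw [show qbinom q (n+1) 0 = qbinom q n 0 from rfl, qbinom_zero_right q n]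

lemma qbinom_eq_zero {K : Type*} [CommRing K] (q : K) : ∀ n m, n < m → qbinom q n m = 0
  | 0, m + 1, _ => rfl
  | n + 1, m + 1, h => by
    rw [show qbinom q (n+1) (m+1) = qbinom q n (m+1) + q ^ (n-m) * qbinom q n m from rfl,
      qbinom_eq_zero q n (m+1) (by omega), qbinom_eq_zero q n m (by omega)]
    ring

section PAAux

variable {k H R : Type*} [CommSemiring k] [Semiring H] [Bialgebra k H]
  [Semiring R] [Algebra k R] (P : PartialAction k H R)

lemma PA3_single (h m u v : H) (hc : Coalgebra.comul (R := k) h = u ⊗ₜ[k] v) (r : R) :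
    P.act h (P.act m r) = P.act u 1 * P.act (v * m) r := by
  rw [P.act_act, hc, TensorProduct.lift.tmul]
  simp [LinearMap.compl₁₂_apply, LinearMap.mul_apply']

lemma PA3_double (h m u v u' v' : H)
    (hc : Coalgebra.comul (R := k) h = u ⊗ₜ[k] v + u' ⊗ₜ[k] v') (r : R) :
    P.act h (P.act m r) = P.act u 1 * P.act (v * m) r + P.act u' 1 * P.act (v' * m) r := by
  rw [P.act_act, hc, map_add, TensorProduct.lift.tmul, TensorProduct.lift.tmul]
  simp [LinearMap.compl₁₂_apply, LinearMap.mul_apply']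

lemma PA2_double (h u v u' v' : H)
    (hc : Coalgebra.comul (R := k) h = u ⊗ₜ[k] v + u' ⊗ₜ[k] v') (r s : R) :
    P.act h (r * s) = P.act u r * P.act v s + P.act u' r * P.act v' s := by
  rw [P.mul_act, hc, map_add, TensorProduct.lift.tmul, TensorProduct.lift.tmul]
  simp [LinearMap.compl₁₂_apply, LinearMap.mul_apply']

end PAAux

/-- The key combinatorial recursion for `Dfun`. -/
lemma Dfun_succ {k A R : Type*} [Field k] [Ring A] [Algebra k A] [Ring R] [Algebra k R]
    (act : A →ₗ[k] R →ₗ[k] R) (g : A) (w : R) (q : k) (j : ℕ) (a : A) (r : R) :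
    Dfun act g w q (j + 1) a r
      = w * Dfun act g w q j a r - q⁻¹ ^ j • (Dfun act g w q j (g * a) r * w) := by
  set Q : k := q⁻¹ with hQ
  have h1 : w * Dfun act g w q j a r
      = ∑ i ∈ Finset.range (j + 2),
          ((-1 : k) ^ i * Q ^ (i * (i - 1) / 2) * qbinom Q j i) •
            (w ^ (j + 1 - i) * act (g ^ i * a) r * w ^ i) := by
    rw [Finset.sum_range_succ, qbinom_eq_zero Q j (j + 1) (by omega)]
    simp only [mul_zero, zero_smul, add_zero]
    simp only [Dfun]
    rw [Finset.mul_sum]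
    refine Finset.sum_congr rfl fun i hi => ?_
    rw [mul_smul_comm]
    congr 1
    have hij : j + 1 - i = (j - i) + 1 := by
      have := Finset.mem_range.mp hi; omega
    rw [hij, pow_succ']
    simp [mul_assoc]
  have h2 : Q ^ j • (Dfun act g w q j (g * a) r * w)
      = ∑ i ∈ Finset.range (j + 2),
          (if i = 0 then (0 : k)
            else Q ^ j * ((-1 : k) ^ (i - 1) * Q ^ ((i - 1) * (i - 1 - 1) / 2)
              * qbinom Q j (i - 1))) •
            (w ^ (j + 1 - i) * act (g ^ i * a) r * w ^ i) := by
    have hs := Finset.sum_range_succ' (fun i =>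
      (if i = 0 then (0 : k)
        else Q ^ j * ((-1 : k) ^ (i - 1) * Q ^ ((i - 1) * (i - 1 - 1) / 2)
          * qbinom Q j (i - 1))) •
        (w ^ (j + 1 - i) * act (g ^ i * a) r * w ^ i)) (j + 1)
    rw [hs]
    simp only [eq_self_iff_true, if_true, zero_smul, add_zero, Nat.add_sub_cancel,
      Nat.succ_sub_succ, Nat.sub_zero, Nat.succ_ne_zero, if_false]
    simp only [Dfun]
    rw [Finset.sum_mul, Finset.smul_sum]
    refine Finset.sum_congr rfl fun i hi => ?_
    rw [smul_mul_assoc, smul_smul]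
    congr 1
    rw [show g ^ (i + 1) * a = g ^ i * (g * a) by rw [pow_succ, mul_assoc]]
    rw [pow_succ]
    simp [mul_assoc]
  rw [h1, h2, ← Finset.sum_sub_distrib]
  simp only [Dfun]
  refine Finset.sum_congr rfl fun i hi => ?_
  rw [← sub_smul]
  congr 1
  obtain _ | m := i
  · simp [qbinom_zero_right]
  · have hm : m ≤ j := by have := Finset.mem_range.mp hi; omega
    rw [if_neg (Nat.succ_ne_zero m)]
    simp only [Nat.add_sub_cancel]
    rw [show qbinom Q (j + 1) (m + 1)
        = qbinom Q j (m + 1) + Q ^ (j - m) * qbinom Q j m from rfl]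
    have ht : (m + 1) * m / 2 = m * (m - 1) / 2 + m := by
      simpa using Nat.triangle_succ m
    have hexp : (m + 1) * m / 2 + (j - m) = m * (m - 1) / 2 + j := by
      rw [ht]; omega
    have hpow : Q ^ ((m + 1) * m / 2) * Q ^ (j - m)
        = Q ^ (m * (m - 1) / 2) * Q ^ j := by
      rw [← pow_add, ← pow_add, hexp, Nat.add_comm]
    linear_combination (-((-1 : k) ^ m * qbinom Q j m)) * hpow

/-- Theorem 3.3: if `gx = q⁻¹ xg` and `g · 1_R = 0`, then
`(xʲa) · r = Σ_k (-1)^k q^{-k(k-1)/2} binom(j,k)_{q⁻¹} (x·1)^{j-k} ((gᵏa)·r) (x·1)^k`. -/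
theorem stmt7 {k H R : Type*} [Field k] [IsAlgClosed k] [CharZero k]
    [Ring H] [HopfAlgebra k H] [Ring R] [Algebra k R]
    (P : PartialAction k H R) (g x : H)
    (hg : IsGrouplike k g) (hx : IsOneGPrimitive k g x)
    (q : k) (hq : q ≠ 0) (hgx : g * x = q⁻¹ • (x * g))
    (hg0 : P.act g 1 = 0) :
    ∀ (a : H) (r : R) (j : ℕ),
      P.act (x ^ j * a) r = Dfun P.act g (P.act x 1) q j a r := by
  obtain ⟨hgc, hge⟩ := hg
  have hxc : Coalgebra.comul (R := k) x = x ⊗ₜ[k] (1 : H) + g ⊗ₜ[k] x := hx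
  set w : R := P.act x 1 with hw
  -- the inverse of g
  set g' : H := HopfAlgebra.antipode (R := k) g with hg'
  have hg'g : g' * g = 1 := by
    have h0 := HopfAlgebra.mul_antipode_rTensor_comul_apply (R := k) (A := H) (a := g)
    rw [hgc] at h0
    simpa [hge, LinearMap.rTensor_tmul, LinearMap.mul'_apply] using h0
  have hgg' : g * g' = 1 := by
    have h0 := HopfAlgebra.mul_antipode_lTensor_comul_apply (R := k) (A := H) (a := g)
    rw [hgc] at h0
    simpa [hge, LinearMap.lTensor_tmul, LinearMap.mul'_apply] using h0
  have hcg' : Coalgebra.comul (R := k) g' = g' ⊗ₜ[k] g' := by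
    have h1 : (g ⊗ₜ[k] g) * Coalgebra.comul (R := k) g' = 1 := by
      rw [← hgc, ← Bialgebra.comul_mul, hgg', Bialgebra.comul_one]
    have h2 : (g' ⊗ₜ[k] g') * (g ⊗ₜ[k] g) = 1 := by
      rw [Algebra.TensorProduct.tmul_mul_tmul, hg'g, ← Algebra.TensorProduct.one_def]
    calc Coalgebra.comul (R := k) g'
        = ((g' ⊗ₜ[k] g') * (g ⊗ₜ[k] g)) * Coalgebra.comul (R := k) g' := by rw [h2, one_mul]
      _ = (g' ⊗ₜ[k] g') * ((g ⊗ₜ[k] g) * Coalgebra.comul (R := k) g') := by rw [mul_assoc]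
      _ = g' ⊗ₜ[k] g' := by rw [h1, mul_one]
  -- g acts as zero
  have hactg : ∀ r : R, P.act g r = 0 := by
    intro r
    have h0 := PA3_single P g 1 g g hgc r
    rw [P.unit_act, mul_one, hg0, zero_mul] at h0
    exact h0
  have hactg'1 : P.act g' 1 = 0 := by
    have h0 := PA3_single P g' g g' g' hcg' 1
    rw [hactg 1, map_zero, hg'g, P.unit_act, mul_one] at h0
    exact h0.symm
  -- y := x * g' and its action
  set y : H := x * g' with hy
  have hcy : Coalgebra.comul (R := k) y = y ⊗ₜ[k] g' + (1 : H) ⊗ₜ[k] y := by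
    rw [hy, Bialgebra.comul_mul, hxc, hcg', add_mul,
      Algebra.TensorProduct.tmul_mul_tmul, Algebra.TensorProduct.tmul_mul_tmul,
      one_mul, hgg']
  have hyg : y * g = x := by rw [hy, mul_assoc, hg'g, mul_one]
  have hy1 : P.act y 1 = -w := by
    have h0 := PA3_double P y g y g' 1 y hcy 1
    rw [hg0, map_zero, hg'g, hyg, P.unit_act 1, mul_one, one_mul, ← hw] at h0
    exact eq_neg_of_add_eq_zero_left h0.symm
  have hyact : ∀ t : R, P.act y t = -(t * w) := by
    intro t
    have h0 := PA2_double P y y g' 1 y hcy t 1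
    rw [mul_one, hactg'1, mul_zero, P.unit_act, hy1, zero_add, mul_neg] at h0
    exact h0
  -- the key step lemma
  have key : ∀ (b : H) (r : R),
      P.act (x * b) r = w * P.act b r - P.act (g * b) r * w := by
    intro b r
    have h0 := PA3_double P y (g * b) y g' 1 y hcy r
    have e1 : g' * (g * b) = b := by rw [← mul_assoc, hg'g, one_mul]
    have e2 : y * (g * b) = x * b := by rw [← mul_assoc, hyg]
    rw [hyact, hy1, e1, e2, P.unit_act 1, one_mul, neg_mul] at h0
    calc P.act (x * b) r
        = (-(w * P.act b r) + P.act (x * b) r) + w * P.act b r := by abel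
      _ = -(P.act (g * b) r * w) + w * P.act b r := by rw [← h0]
      _ = w * P.act b r - P.act (g * b) r * w := by noncomm_ring
  -- commutation of g with powers of x
  have hgpow : ∀ n : ℕ, g * x ^ n = q⁻¹ ^ n • (x ^ n * g) := by
    intro n
    induction n with
    | zero => simp
    | succ n ih =>
      rw [pow_succ, ← mul_assoc, ih, smul_mul_assoc, mul_assoc, hgx, mul_smul_comm,
        smul_smul, ← pow_succ, ← mul_assoc]
  -- main induction
  intro a r j
  induction j generalizing a with
  | zero =>
    simp [Dfun, qbinom_zero_right]
  | succ j ih =>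
    have e0 : x ^ (j + 1) * a = x * (x ^ j * a) := by rw [pow_succ', mul_assoc]
    rw [e0, key (x ^ j * a) r]
    have e1 : g * (x ^ j * a) = q⁻¹ ^ j • (x ^ j * (g * a)) := by
      rw [← mul_assoc, hgpow j, smul_mul_assoc, mul_assoc]
    rw [e1, map_smul, LinearMap.smul_apply, ih a, ih (g * a), smul_mul_assoc]
    exact (Dfun_succ P.act g w q j a r).symm
end

section
/- Let g ∈ H be a grouplike element, x ∈ H a (1,g)-primitive element with xg = q·gx for some q ∈ k^×, and let A ⊆ H be a subalgebra with g, g⁻¹ ∈ A and Δ(A) ⊆ A⊗A. Suppose τ : A → A is a bijective algebra map satisfying, for all a ∈ A: ax = x·τ(a), Δ(τ(a)) = Σ τ(a₁) ⊗ a₂, and Δ(τ(a)) = Σ g⁻¹a₁g ⊗ τ(a₂) (τ plays the role of σ⁻¹ for a Hopf–Ore extension A[x,σ]). If · is a partial action of H on R with g·1_R = 0, then for all a ∈ A and r ∈ R: a·(x·r) = Σ (a₁·1_R)·(x·1_R)·(τ(a₂)·r). -/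
open TensorProduct

/-- Corollary 3.4: under the Hopf–Ore extension hypotheses, if `g · 1_R = 0`
then `a · (x · r) = Σ (a₁ · 1_R)(x · 1_R)(τ(a₂) · r)` for all `a ∈ A`, `r ∈ R`. -/
theorem stmt8 {k H A R : Type*} [Field k] [IsAlgClosed k] [CharZero k]
    [Ring H] [HopfAlgebra k H] [Ring A] [Bialgebra k A] [Ring R] [Algebra k R]
    -- `A ⊆ H` is a subalgebra with `Δ(A) ⊆ A ⊗ A`: we realize it as an injective algebra map
    -- `ι : A → H` compatible with the comultiplications and counits
    (ι : A →ₐ[k] H) (hιinj : Function.Injective ι)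
    (hιcomul : ∀ a : A, Coalgebra.comul (R := k) (ι a) =
      TensorProduct.map ι.toLinearMap ι.toLinearMap (Coalgebra.comul (R := k) a))
    (hιcounit : ∀ a : A, Coalgebra.counit (R := k) (ι a) = Coalgebra.counit (R := k) a)
    -- `g, g⁻¹ ∈ A`, with `g` grouplike and `g⁻¹ = S(g)` its inverse
    (g gi : A) (hg : IsGrouplike k (ι g))
    (hggi : ι g * ι gi = 1) (hgig : ι gi * ι g = 1)
    -- `x` is `(1,g)`-primitive with `xg = q gx`
    (x : H) (hx : IsOneGPrimitive k (ι g) x)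
    (q : k) (hq : q ≠ 0) (hxg : x * ι g = q • (ι g * x))
    -- `τ` is a bijective algebra map `A → A` (playing the role of `σ⁻¹`) with `ax = xτ(a)`,
    -- `Δ(τ(a)) = Σ τ(a₁) ⊗ a₂` and `Δ(τ(a)) = Σ g⁻¹a₁g ⊗ τ(a₂)`
    (τ : A ≃ₐ[k] A)
    (hτx : ∀ a : A, ι a * x = x * ι (τ a))
    (hτ1 : ∀ a : A, Coalgebra.comul (R := k) (τ a) =
      TensorProduct.map τ.toLinearMap LinearMap.id (Coalgebra.comul (R := k) a))
    (hτ2 : ∀ a : A,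
      TensorProduct.map ι.toLinearMap ι.toLinearMap (Coalgebra.comul (R := k) (τ a)) =
        TensorProduct.map
          ((LinearMap.mulLeft k (ι gi)).comp
            ((LinearMap.mulRight k (ι g)).comp ι.toLinearMap))
          (ι.toLinearMap.comp τ.toLinearMap)
          (Coalgebra.comul (R := k) a))
    -- a partial action of `H` on `R` with `g · 1_R = 0`
    (P : PartialAction k H R) (hg0 : P.act (ι g) 1 = 0) :
    ∀ (a : A) (r : R),
      P.act (ι a) (P.act x r) =
        TensorProduct.lift ((LinearMap.mul k R).compl₁₂
            ((P.act.flip 1).comp ι.toLinearMap)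
            ((LinearMap.mulLeft k (P.act x 1)).comp
              ((P.act.flip r).comp (ι.toLinearMap.comp τ.toLinearMap))))
          (Coalgebra.comul (R := k) a) := by
  intro a r
  -- evaluation of `lift` of a `compl₁₂`-bilinear form on a simple tensor (over `H`)
  have evalB : ∀ (f f' : H →ₗ[k] R) (h₁ h₂ : H),
      TensorProduct.lift ((LinearMap.mul k R).compl₁₂ f f') (h₁ ⊗ₜ[k] h₂) = f h₁ * f' h₂ := by
    intro f f' h₁ h₂
    simp [LinearMap.compl₁₂_apply, LinearMap.mul_apply']
  -- `g` kills everything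
  have hgr : ∀ s : R, P.act (ι g) s = 0 := by
    intro s
    have h := P.act_act (ι g) 1 s
    rw [P.unit_act, hg.1] at h
    rw [h, evalB]
    simp only [LinearMap.flip_apply]
    rw [hg0, zero_mul]
  -- `comul (ι gi) = ι gi ⊗ ι gi`
  have comul_gi : Coalgebra.comul (R := k) (ι gi) = (ι gi) ⊗ₜ[k] (ι gi) := by
    have h1 : Coalgebra.comul (R := k) (ι g) * Coalgebra.comul (R := k) (ι gi) = 1 := by
      rw [← Bialgebra.comul_mul, hggi, Bialgebra.comul_one]
    have h2 : ((ι gi) ⊗ₜ[k] (ι gi)) * ((ι g) ⊗ₜ[k] (ι g)) = 1 := by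
      rw [Algebra.TensorProduct.tmul_mul_tmul, hgig, Algebra.TensorProduct.one_def]
    calc Coalgebra.comul (R := k) (ι gi)
        = (((ι gi) ⊗ₜ[k] (ι gi)) * ((ι g) ⊗ₜ[k] (ι g))) * Coalgebra.comul (R := k) (ι gi) := by
          rw [h2, one_mul]
      _ = ((ι gi) ⊗ₜ[k] (ι gi)) *
            (((ι g) ⊗ₜ[k] (ι g)) * Coalgebra.comul (R := k) (ι gi)) := by rw [mul_assoc]
      _ = ((ι gi) ⊗ₜ[k] (ι gi)) * 1 := by rw [← hg.1, h1]
      _ = (ι gi) ⊗ₜ[k] (ι gi) := mul_one _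
  -- `gi · 1 = 0`
  have hgi1 : P.act (ι gi) 1 = 0 := by
    have h := P.act_act (ι gi) (ι g) 1
    rw [hg0, map_zero, comul_gi, evalB] at h
    simp only [LinearMap.flip_apply, LinearMap.coe_comp, Function.comp_apply,
      LinearMap.mulRight_apply] at h
    rw [hgig, P.unit_act, mul_one] at h
    exact h.symm
  -- `comul (x * ι gi)`
  have comul_xgi : Coalgebra.comul (R := k) (x * ι gi)
      = (x * ι gi) ⊗ₜ[k] (ι gi) + (1 : H) ⊗ₜ[k] (x * ι gi) := by
    rw [Bialgebra.comul_mul, hx, comul_gi, add_mul,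
      Algebra.TensorProduct.tmul_mul_tmul, Algebra.TensorProduct.tmul_mul_tmul,
      one_mul, hggi]
  -- `(x * gi) · 1 = - (x · 1)`
  have hxgi1 : P.act (x * ι gi) 1 = - P.act x 1 := by
    have h := P.act_act (x * ι gi) (ι g) 1
    rw [hg0, map_zero, comul_xgi, map_add, evalB, evalB] at h
    simp only [LinearMap.flip_apply, LinearMap.coe_comp, Function.comp_apply,
      LinearMap.mulRight_apply] at h
    have e2 : x * ι gi * ι g = x := by rw [mul_assoc, hgig, mul_one]
    rw [hgig, e2, P.unit_act, mul_one, one_mul] at h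
    -- h : 0 = P.act (x * ι gi) 1 + P.act x 1
    exact eq_neg_of_add_eq_zero_left h.symm
  -- `(x * gi) · s = - (s * (x·1))`
  have hxgis : ∀ s : R, P.act (x * ι gi) s = -(s * P.act x 1) := by
    intro s
    have h := P.mul_act (x * ι gi) s 1
    rw [mul_one, comul_xgi, map_add, evalB, evalB] at h
    simp only [LinearMap.flip_apply] at h
    rw [hgi1, mul_zero, P.unit_act, hxgi1, zero_add, mul_neg] at h
    exact h
  -- the key identity : `(x ι(c)) · r = (x·1)(ι(c)·r) - (ι(gc)·r)(x·1)` for every `c ∈ A`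
  have miracle : ∀ c : A, P.act (x * ι c) r
      = P.act x 1 * P.act (ι c) r - P.act (ι g * ι c) r * P.act x 1 := by
    intro c
    have h := P.act_act (x * ι gi) (ι g * ι c) r
    rw [comul_xgi, map_add, evalB, evalB] at h
    simp only [LinearMap.flip_apply, LinearMap.coe_comp, Function.comp_apply,
      LinearMap.mulRight_apply] at h
    have e1 : ι gi * (ι g * ι c) = ι c := by rw [← mul_assoc, hgig, one_mul]
    have e2 : x * ι gi * (ι g * ι c) = x * ι c := by
      rw [mul_assoc x (ι gi) (ι g * ι c), e1]
    rw [hxgis, e1, e2, hxgi1, P.unit_act, one_mul] at h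
    -- h : -(P.act (ι g * ι c) r * P.act x 1) = -P.act x 1 * P.act (ι c) r + P.act (x * ι c) r
    rw [neg_mul] at h
    have h4 : P.act (x * ι c) r
        = -(P.act (ι g * ι c) r * P.act x 1) - -(P.act x 1 * P.act (ι c) r) := by
      rw [h]; abel
    rw [h4]; abel
  -- pushing `lift` through `TensorProduct.map`
  have Lmap : ∀ (f₁ f₂ : A →ₗ[k] H) (u v : H →ₗ[k] R) (z : A ⊗[k] A),
      TensorProduct.lift ((LinearMap.mul k R).compl₁₂ u v) (TensorProduct.map f₁ f₂ z)
        = TensorProduct.lift ((LinearMap.mul k R).compl₁₂ (u ∘ₗ f₁) (v ∘ₗ f₂)) z := by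
    intro f₁ f₂ u v z
    induction z using TensorProduct.induction_on with
    | zero => simp
    | tmul p q =>
        rw [TensorProduct.map_tmul, evalB]
        simp [LinearMap.compl₁₂_apply, LinearMap.mul_apply']
    | add z₁ z₂ ih₁ ih₂ => rw [map_add, map_add, map_add, ih₁, ih₂]
  -- conjugating a mapped tensor by `g ⊗ g` , `gi ⊗ gi`
  have Lconj : ∀ (f₁ f₂ : A →ₗ[k] H) (z : A ⊗[k] A),
      ((ι g) ⊗ₜ[k] (ι g)) * TensorProduct.map f₁ f₂ z * ((ι gi) ⊗ₜ[k] (ι gi))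
        = TensorProduct.map
            ((LinearMap.mulLeft k (ι g)) ∘ₗ ((LinearMap.mulRight k (ι gi)) ∘ₗ f₁))
            ((LinearMap.mulLeft k (ι g)) ∘ₗ ((LinearMap.mulRight k (ι gi)) ∘ₗ f₂)) z := by
    intro f₁ f₂ z
    induction z using TensorProduct.induction_on with
    | zero => simp
    | tmul p q =>
        rw [TensorProduct.map_tmul, Algebra.TensorProduct.tmul_mul_tmul,
          Algebra.TensorProduct.tmul_mul_tmul, TensorProduct.map_tmul]
        simp only [LinearMap.coe_comp, Function.comp_apply, LinearMap.mulLeft_apply,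
          LinearMap.mulRight_apply, mul_assoc]
    | add z₁ z₂ ih₁ ih₂ => rw [map_add, mul_add, add_mul, map_add, ih₁, ih₂]
  -- comultiplication of `g τ(a) g⁻¹`
  have comul_conj : Coalgebra.comul (R := k) (ι g * ι (τ a) * ι gi)
      = TensorProduct.map ι.toLinearMap
          ((LinearMap.mulLeft k (ι g)) ∘ₗ ((LinearMap.mulRight k (ι gi)) ∘ₗ
            (ι.toLinearMap ∘ₗ τ.toLinearMap)))
          (Coalgebra.comul (R := k) a) := by
    have c1 : Coalgebra.comul (R := k) (ι (τ a))
        = TensorProduct.map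
            ((LinearMap.mulLeft k (ι gi)).comp ((LinearMap.mulRight k (ι g)).comp ι.toLinearMap))
            (ι.toLinearMap.comp τ.toLinearMap) (Coalgebra.comul (R := k) a) := by
      rw [hιcomul (τ a), hτ2 a]
    have hf1 : (LinearMap.mulLeft k (ι g)) ∘ₗ ((LinearMap.mulRight k (ι gi)) ∘ₗ
          ((LinearMap.mulLeft k (ι gi)).comp ((LinearMap.mulRight k (ι g)).comp ι.toLinearMap)))
        = ι.toLinearMap := by
      ext b
      simp only [LinearMap.coe_comp, Function.comp_apply, LinearMap.mulLeft_apply,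
        LinearMap.mulRight_apply, AlgHom.toLinearMap_apply]
      -- ι g * ((ι gi * (ι b * ι g)) * ι gi) = ι b
      rw [mul_assoc (ι gi) (ι b * ι g) (ι gi), mul_assoc (ι b) (ι g) (ι gi), hggi, mul_one,
        ← mul_assoc (ι g) (ι gi) (ι b), hggi, one_mul]
    rw [Bialgebra.comul_mul, Bialgebra.comul_mul, hg.1, comul_gi, c1, Lconj, hf1]
  -- step 7 : `Σ (a₁·1) ((g τ(a₂))·r) = 0`
  have step7 : TensorProduct.lift ((LinearMap.mul k R).compl₁₂
        ((P.act.flip 1) ∘ₗ ι.toLinearMap)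
        ((P.act.flip r) ∘ₗ ((LinearMap.mulLeft k (ι g)) ∘ₗ (ι.toLinearMap ∘ₗ τ.toLinearMap))))
      (Coalgebra.comul (R := k) a) = 0 := by
    have h := P.act_act (ι g * ι (τ a) * ι gi) (ι g) r
    rw [hgr r, map_zero, comul_conj, Lmap] at h
    have hfun : ((P.act.flip r).comp (LinearMap.mulRight k (ι g))) ∘ₗ
          ((LinearMap.mulLeft k (ι g)) ∘ₗ ((LinearMap.mulRight k (ι gi)) ∘ₗ
            (ι.toLinearMap ∘ₗ τ.toLinearMap)))
        = (P.act.flip r) ∘ₗ ((LinearMap.mulLeft k (ι g)) ∘ₗ (ι.toLinearMap ∘ₗ τ.toLinearMap)) := by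
      ext b
      simp only [LinearMap.coe_comp, Function.comp_apply, LinearMap.mulLeft_apply,
        LinearMap.mulRight_apply, AlgHom.toLinearMap_apply, LinearMap.flip_apply]
      congr 2
      rw [mul_assoc, mul_assoc, hgig, mul_one]
    rw [hfun] at h
    exact h.symm
  -- main computation
  have main := P.act_act (ι a) x r
  rw [hιcomul a, Lmap] at main
  have key : ∀ z : A ⊗[k] A,
      TensorProduct.lift ((LinearMap.mul k R).compl₁₂ ((P.act.flip 1) ∘ₗ ι.toLinearMap)
        (((P.act.flip r).comp (LinearMap.mulRight k x)) ∘ₗ ι.toLinearMap)) z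
      = TensorProduct.lift ((LinearMap.mul k R).compl₁₂
            ((P.act.flip 1).comp ι.toLinearMap)
            ((LinearMap.mulLeft k (P.act x 1)).comp
              ((P.act.flip r).comp (ι.toLinearMap.comp τ.toLinearMap)))) z
        - (TensorProduct.lift ((LinearMap.mul k R).compl₁₂
            ((P.act.flip 1) ∘ₗ ι.toLinearMap)
            ((P.act.flip r) ∘ₗ ((LinearMap.mulLeft k (ι g)) ∘ₗ
              (ι.toLinearMap ∘ₗ τ.toLinearMap)))) z) * P.act x 1 := by
    intro z
    induction z using TensorProduct.induction_on with
    | zero => simp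
    | tmul p q =>
        simp only [TensorProduct.lift.tmul, LinearMap.compl₁₂_apply, LinearMap.mul_apply',
          LinearMap.coe_comp, Function.comp_apply, LinearMap.flip_apply,
          LinearMap.mulRight_apply, LinearMap.mulLeft_apply, AlgHom.toLinearMap_apply,
          AlgEquiv.toLinearMap_apply]
        rw [hτx q, miracle (τ q), mul_sub, mul_assoc]
    | add z₁ z₂ ih₁ ih₂ =>
        rw [map_add, map_add, map_add, ih₁, ih₂, add_mul]
        abel
  rw [main, key (Coalgebra.comul (R := k) a), step7, zero_mul, sub_zero]
end

section
/- Let g ∈ H be a grouplike element, x ∈ H a (1,g)-primitive element with xg = q·gx for some q ∈ k^×, and let A ⊆ H be a subalgebra with g, g⁻¹ ∈ A and Δ(A) ⊆ A⊗A. Suppose τ : A → A is a bijective algebra map satisfying, for all a ∈ A: ax = x·τ(a), Δ(τ(a)) = Σ τ(a₁) ⊗ a₂, and Δ(τ(a)) = Σ g⁻¹a₁g ⊗ τ(a₂). Let · be a partial action of H on R with g·1_R = 0. If moreover x·1_R ∈ Z(R) and (ga)·1_R = (ag)·1_R for all a ∈ A, then a·(x·1_R) = (τ(a)·1_R)·(x·1_R)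 for all a ∈ A. -/
open TensorProduct

/-- Remark 4.1: under the Hopf–Ore extension hypotheses with `g · 1_R = 0`,
if moreover `x · 1_R ∈ Z(R)` and `(ga) · 1_R = (ag) · 1_R` for all `a ∈ A`, then
`a · (x · 1_R) = (τ(a) · 1_R)(x · 1_R)`. -/
theorem stmt13 {k H A R : Type*} [Field k] [IsAlgClosed k] [CharZero k]
    [Ring H] [HopfAlgebra k H] [Ring A] [Bialgebra k A] [Ring R] [Algebra k R]
    -- `A ⊆ H` is a subalgebra with `Δ(A) ⊆ A ⊗ A`: we realize it as an injective algebra map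
    -- `ι : A → H` compatible with the comultiplications and counits
    (ι : A →ₐ[k] H) (hιinj : Function.Injective ι)
    (hιcomul : ∀ a : A, Coalgebra.comul (R := k) (ι a) =
      TensorProduct.map ι.toLinearMap ι.toLinearMap (Coalgebra.comul (R := k) a))
    (hιcounit : ∀ a : A, Coalgebra.counit (R := k) (ι a) = Coalgebra.counit (R := k) a)
    -- `g, g⁻¹ ∈ A`, with `g` grouplike and `g⁻¹ = S(g)` its inverse
    (g gi : A) (hg : IsGrouplike k (ι g))
    (hggi : ι g * ι gi = 1) (hgig : ι gi * ι g = 1)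
    -- `x` is `(1,g)`-primitive with `xg = q gx`
    (x : H) (hx : IsOneGPrimitive k (ι g) x)
    (q : k) (hq : q ≠ 0) (hxg : x * ι g = q • (ι g * x))
    -- `τ` is a bijective algebra map `A → A` (playing the role of `σ⁻¹`) with `ax = xτ(a)`,
    -- `Δ(τ(a)) = Σ τ(a₁) ⊗ a₂` and `Δ(τ(a)) = Σ g⁻¹a₁g ⊗ τ(a₂)`
    (τ : A ≃ₐ[k] A)
    (hτx : ∀ a : A, ι a * x = x * ι (τ a))
    (hτ1 : ∀ a : A, Coalgebra.comul (R := k) (τ a) =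
      TensorProduct.map τ.toLinearMap LinearMap.id (Coalgebra.comul (R := k) a))
    (hτ2 : ∀ a : A,
      TensorProduct.map ι.toLinearMap ι.toLinearMap (Coalgebra.comul (R := k) (τ a)) =
        TensorProduct.map
          ((LinearMap.mulLeft k (ι gi)).comp
            ((LinearMap.mulRight k (ι g)).comp ι.toLinearMap))
          (ι.toLinearMap.comp τ.toLinearMap)
          (Coalgebra.comul (R := k) a))
    -- a partial action of `H` on `R` with `g · 1_R = 0`
    (P : PartialAction k H R) (hg0 : P.act (ι g) 1 = 0)
    (hxZ : P.act x 1 ∈ Set.center R)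
    (hcomm : ∀ a : A, P.act (ι g * ι a) 1 = P.act (ι a * ι g) 1) :
    ∀ a : A, P.act (ι a) (P.act x 1) = P.act (ι (τ a)) 1 * P.act x 1 := by
  intro a
  -- basic facts
  have hzc : ∀ r : R, r * P.act x 1 = P.act x 1 * r :=
    fun r => Semigroup.mem_center_iff.mp hxZ r
  have f1 : P.act (1 : H) (1 : R) = 1 := P.unit_act 1
  have hx' : Coalgebra.comul (R := k) x = x ⊗ₜ[k] (1 : H) + ι g ⊗ₜ[k] x := hx
  have hg1 : Coalgebra.comul (R := k) (ι g) = ι g ⊗ₜ[k] ι g := hg.1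
  have hmulc : ∀ u v : H, Coalgebra.comul (R := k) (u * v) =
      Coalgebra.comul (R := k) u * Coalgebra.comul (R := k) v :=
    fun u v => Bialgebra.comul_mul u v
  -- comul of ι gi
  have Egi : Coalgebra.comul (R := k) (ι gi) = ι gi ⊗ₜ[k] ι gi := by
    have h1 : (ι g ⊗ₜ[k] ι g) * Coalgebra.comul (R := k) (ι gi) = 1 := by
      rw [← hg1, ← hmulc, hggi, Bialgebra.comul_one]
    calc Coalgebra.comul (R := k) (ι gi)
        = ((ι gi ⊗ₜ[k] ι gi) * (ι g ⊗ₜ[k] ι g)) * Coalgebra.comul (R := k) (ι gi) := by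
          rw [Algebra.TensorProduct.tmul_mul_tmul, hgig, ← Algebra.TensorProduct.one_def,
            one_mul]
      _ = (ι gi ⊗ₜ[k] ι gi) * ((ι g ⊗ₜ[k] ι g) * Coalgebra.comul (R := k) (ι gi)) :=
          mul_assoc _ _ _
      _ = ι gi ⊗ₜ[k] ι gi := by rw [h1, mul_one]
  -- comul of x * ι gi
  have Exgi : Coalgebra.comul (R := k) (x * ι gi) =
      (x * ι gi) ⊗ₜ[k] ι gi + (1 : H) ⊗ₜ[k] (x * ι gi) := by
    rw [hmulc, hx', Egi, add_mul, Algebra.TensorProduct.tmul_mul_tmul,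
      Algebra.TensorProduct.tmul_mul_tmul, one_mul, hggi]
  -- act (ι gi) 1 = 0
  have p3 : P.act (ι gi) (1 : R) = 0 := by
    have h := P.act_act (ι gi) (ι g) 1
    rw [hg0, map_zero, Egi] at h
    simp only [TensorProduct.lift.tmul, LinearMap.compl₁₂_apply, LinearMap.mul_apply',
      LinearMap.flip_apply, LinearMap.coe_comp, Function.comp_apply,
      LinearMap.mulRight_apply, hgig, f1, mul_one] at h
    exact h.symm
  -- act (x * ι gi) 1 = - act x 1
  have p4 : P.act (x * ι gi) (1 : R) = - P.act x 1 := by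
    have h := P.act_act (x * ι gi) (ι g) 1
    rw [hg0, map_zero, Exgi] at h
    simp only [map_add, TensorProduct.lift.tmul, LinearMap.compl₁₂_apply, LinearMap.mul_apply',
      LinearMap.flip_apply, LinearMap.coe_comp, Function.comp_apply,
      LinearMap.mulRight_apply, hgig, f1, mul_one, one_mul,
      mul_assoc x (ι gi) (ι g)] at h
    -- h : 0 = P.act (x * ι gi) 1 + P.act x 1
    exact eq_neg_of_add_eq_zero_left h.symm
  -- act (x * ι gi) r = -(r * act x 1)
  have p5 : ∀ r : R, P.act (x * ι gi) r = -(r * P.act x 1) := by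
    intro r
    have h := P.mul_act (x * ι gi) r 1
    rw [mul_one, Exgi] at h
    simp only [map_add, TensorProduct.lift.tmul, LinearMap.compl₁₂_apply, LinearMap.mul_apply',
      LinearMap.flip_apply, p3, mul_zero, P.unit_act, p4, zero_add, mul_neg] at h
    exact h
  -- conjugation invariance
  have p6 : ∀ c : A, P.act (ι gi * (ι c * ι g)) 1 = P.act (ι c) 1 := by
    intro c
    have h := hcomm (gi * c)
    have e1 : ι g * (ι gi * ι c) = ι c := by rw [← mul_assoc, hggi, one_mul]
    have e2 : ι gi * ι c * ι g = ι gi * (ι c * ι g) := mul_assoc _ _ _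
    rw [show ι (gi * c) = ι gi * ι c from map_mul ι gi c, e1, e2] at h
    exact h.symm
  -- act (x * ι c) 1 = z * act (ι c) 1 - act (ι g * ι c) 1 * z
  have p7 : ∀ c : A, P.act (x * ι c) 1 =
      P.act x 1 * P.act (ι c) 1 - P.act (ι g * ι c) 1 * P.act x 1 := by
    intro c
    have h := P.act_act (x * ι gi) (ι g * ι c) 1
    rw [Exgi] at h
    simp only [map_add, TensorProduct.lift.tmul, LinearMap.compl₁₂_apply, LinearMap.mul_apply',
      LinearMap.flip_apply, LinearMap.coe_comp, Function.comp_apply,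
      LinearMap.mulRight_apply, f1, one_mul] at h
    rw [p5 (P.act (ι g * ι c) 1), p4] at h
    have e1 : ι gi * (ι g * ι c) = ι c := by rw [← mul_assoc, hgig, one_mul]
    have e2 : x * ι gi * (ι g * ι c) = x * ι c := by
      rw [mul_assoc x, ← mul_assoc (ι gi), hgig, one_mul]
    rw [e1, e2, neg_mul] at h
    -- h : -(P.act (ι g * ι c) 1 * P.act x 1) = -(P.act x 1 * P.act (ι c) 1) + P.act (x * ι c) 1
    rw [sub_eq_add_neg, h]
    abel
  -- main computation
  have h1 := P.act_act (ι a) x 1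
  rw [hιcomul a] at h1
  have h2 := P.mul_act (ι (τ a)) 1 1
  rw [one_mul, hιcomul (τ a), hτ2 a] at h2
  have h3 := P.act_act (ι (τ a)) (ι g) 1
  rw [hg0, map_zero, hιcomul (τ a), hτ2 a] at h3
  have main : ∀ s : A ⊗[k] A,
      TensorProduct.lift
        ((LinearMap.mul k R).compl₁₂ (P.act.flip 1)
          ((P.act.flip 1).comp (LinearMap.mulRight k x)))
        (TensorProduct.map ι.toLinearMap ι.toLinearMap s) =
      P.act x 1 * TensorProduct.lift
        ((LinearMap.mul k R).compl₁₂ (P.act.flip 1) (P.act.flip 1))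
        (TensorProduct.map
          ((LinearMap.mulLeft k (ι gi)).comp
            ((LinearMap.mulRight k (ι g)).comp ι.toLinearMap))
          (ι.toLinearMap.comp τ.toLinearMap) s)
      - TensorProduct.lift
        ((LinearMap.mul k R).compl₁₂ (P.act.flip 1)
          ((P.act.flip 1).comp (LinearMap.mulRight k (ι g))))
        (TensorProduct.map
          ((LinearMap.mulLeft k (ι gi)).comp
            ((LinearMap.mulRight k (ι g)).comp ι.toLinearMap))
          (ι.toLinearMap.comp τ.toLinearMap) s) * P.act x 1 := by
    intro s
    induction s using TensorProduct.induction_on with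
    | zero => simp
    | tmul c d =>
      simp only [TensorProduct.map_tmul, TensorProduct.lift.tmul, LinearMap.compl₁₂_apply,
        LinearMap.mul_apply', LinearMap.flip_apply, LinearMap.coe_comp, Function.comp_apply,
        LinearMap.mulRight_apply, LinearMap.mulLeft_apply, AlgHom.toLinearMap_apply,
        AlgEquiv.toLinearMap_apply]
      rw [hτx d, p7 (τ d), p6 c, ← hcomm (τ d), mul_sub, ← mul_assoc, hzc (P.act (ι c) 1),
        mul_assoc, ← mul_assoc (P.act (ι c) 1)]
    | add u v hu hv =>
      simp only [map_add, hu, hv, mul_add, add_mul]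
      abel
  rw [h1, h2, main (Coalgebra.comul (R := k) a), ← h3, zero_mul, sub_zero,
    ← hzc]
end

section
/- Let · be a partial action of the Hopf algebra A on R, let g ∈ A be a grouplike element with g·1_R = 0, and let τ : A → A be an algebra automorphism satisfying Δ(τ(a)) = Σ τ(a₁) ⊗ a₂ and Δ(τ(a)) = Σ g⁻¹a₁g ⊗ τ(a₂) for all a ∈ A (τ plays the role of σ⁻¹ for a Hopf–Ore extension A[x,σ]). Let w ∈ Z(R) satisfy a·w = (τ(a)·1_R)·w for all a ∈ A. Then: (i) a·w^j = (τ^j(a)·1_R)·w^j for all a ∈ A, j ∈ ℕ₀; (ii) if moreover (ga)·r = (ag)·r for all a ∈ A, r ∈ R, then Σ (a₁·w^j)·((a₂ g^k b)·r) = Σ (a₁·1_R)·((g^k τ^j(a₂) b)·r)·w^j for all a, b ∈ A, r ∈ R, j ∈ ℕ₀ and k ∈ ℤ; (iii) if moreover (ga)·r = (ag)·r for all a ∈ A, r ∈ R, and the partial action is symmetric, then Σ ((a₁ g^k b)·r)·(a₂·w^j) = Σ ((g^k τ^j(a₁) b)·r)·(a₂·1_R)·w^j for all a, b ∈ A, r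 ∈ R, j ∈ ℕ₀ and k ∈ ℤ. -/
open TensorProduct

/-!
Write `f ⋆ g` for the convolution `a ↦ Σ f(a₁) g(a₂)` of linear maps `A → R`; then (PA.2),
(PA.3) and (PA.S) express `h·(rs)` and `h·(m·r)` as convolutions evaluated at `h`.
The two formulas for `Δ(τ a)` say that `(f ⋆ g)(τ a) = ((f ∘ τ) ⋆ g)(a) = ((f ∘ c) ⋆ (g ∘ τ))(a)`
with `c x = g⁻¹xg`. When `g` commutes with everything under the action, `c` is invisible to
`x ↦ x·1`, so powers of `τ` can be moved between the two factors of a convolution against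
`x ↦ x·1`. Part (i) is then an induction on `j` through (PA.2); after pulling out the central
`wʲ`, both sides of (ii) (resp. (iii)) reduce through (PA.3) (resp. (PA.S)) to `τʲ(a)·(m·r)`
with `m = gᵏb` or `m = bgᵏ`, which act alike.
-/

open WithConv Coalgebra

theorem Units.apply_zpow_mul_eq_apply_mul_zpow {M X : Type*} [Monoid M] (f : M → X) (u : Mˣ)
    (hu : ∀ x, f (u * x) = f (x * u)) (n : ℤ) (x : M) :
    f (↑(u ^ n) * x) = f (x * ↑(u ^ n)) := by
  let S : Subgroup Mˣ :=
    { carrier := {v | ∀ x, f (v * x) = f (x * v)}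
      one_mem' := by simp
      mul_mem' := fun {v v'} hv hv' x => by
        simp only [Set.mem_ofPred_eq, Units.val_mul] at *
        rw [mul_assoc, hv, mul_assoc, hv', mul_assoc]
      inv_mem' := fun {v} hv x => by
        simp only [Set.mem_ofPred_eq] at *
        have := hv (↑v⁻¹ * x * ↑v⁻¹)
        simp only [← mul_assoc, Units.mul_inv, one_mul] at this
        rw [this, mul_assoc, Units.inv_mul, mul_one] }
  exact S.zpow_mem hu n x

section Convolution

variable {k C R : Type*} [CommSemiring k] [AddCommMonoid C] [Module k C] [CoalgebraStruct k C]
  [Semiring R] [Algebra k R]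

theorem lift_mul_compl₁₂_comul_eq_convMul (f g : C →ₗ[k] R) (c : C) :
    TensorProduct.lift ((LinearMap.mul k R).compl₁₂ f g) (comul c) = (toConv f * toConv g) c := by
  rw [LinearMap.convMul_apply]
  induction comul (R := k) c using TensorProduct.induction_on with
  | zero => simp
  | tmul x y => simp
  | add x y hx hy => simp [hx, hy]

theorem comul_pow_apply {φ ψ₁ ψ₂ : Module.End k C}
    (h : ∀ c, comul (R := k) (φ c) = TensorProduct.map ψ₁ ψ₂ (comul c)) (n : ℕ) (c : C) :
    comul (R := k) ((φ ^ n) c) = TensorProduct.map (ψ₁ ^ n) (ψ₂ ^ n) (comul c) := by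
  induction n generalizing c with
  | zero => simp [Module.End.one_eq_id]
  | succ n ih =>
    rw [pow_succ, Module.End.mul_apply, ih, h, TensorProduct.map_map, pow_succ, pow_succ]
    rfl

theorem convMul_apply_of_comul_eq {c c' : C} {ψ₁ ψ₂ : Module.End k C}
    (h : comul (R := k) c' = TensorProduct.map ψ₁ ψ₂ (comul c)) (f g : C →ₗ[k] R) :
    (toConv f * toConv g) c' = (toConv (f ∘ₗ ψ₁) * toConv (g ∘ₗ ψ₂)) c := by
  simp only [LinearMap.convMul_apply, h, TensorProduct.map_map]

theorem convMul_mulRight_comp_right (f g : C →ₗ[k] R) (x : R) (c : C) :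
    (toConv f * toConv (LinearMap.mulRight k x ∘ₗ g)) c = (toConv f * toConv g) c * x := by
  simp only [LinearMap.convMul_apply]
  induction comul (R := k) c using TensorProduct.induction_on with
  | zero => simp
  | tmul a b => simp [mul_assoc]
  | add a b ha hb => simp [ha, hb, add_mul]

theorem convMul_mulRight_comp_left (f g : C →ₗ[k] R) {x : R} (hx : x ∈ Set.center R) (c : C) :
    (toConv (LinearMap.mulRight k x ∘ₗ f) * toConv g) c = (toConv f * toConv g) c * x := by
  simp only [LinearMap.convMul_apply]
  induction comul (R := k) c using TensorProduct.induction_on with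
  | zero => simp
  | tmul a b => simp [mul_assoc, Semigroup.mem_center_iff.mp hx]
  | add a b ha hb => simp [ha, hb, add_mul]

end Convolution

section Twisting

variable {k A R : Type*} [CommSemiring k] [Semiring A] [Bialgebra k A] [Semiring R] [Algebra k R]
  {τ : A ≃ₐ[k] A}

theorem comul_algEquiv_pow_apply {ψ₁ ψ₂ : Module.End k A}
    (hτ : ∀ a, comul (R := k) (τ a) = TensorProduct.map ψ₁ ψ₂ (comul a)) (n : ℕ) (a : A) :
    comul (R := k) ((τ ^ n) a) = TensorProduct.map (ψ₁ ^ n) (ψ₂ ^ n) (comul a) := by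
  have hn : (τ ^ n) a = (τ.toLinearMap ^ n) a := by rw [← AlgEquiv.pow_toLinearMap]; rfl
  exact hn ▸ comul_pow_apply (φ := τ.toLinearMap) hτ n a

theorem convMul_apply_algEquiv_pow
    (hτ : ∀ a, comul (R := k) (τ a) = TensorProduct.map τ.toLinearMap LinearMap.id (comul a))
    (f g : A →ₗ[k] R) (n : ℕ) (a : A) :
    (toConv f * toConv g) ((τ ^ n) a) = (toConv (f ∘ₗ (τ ^ n).toLinearMap) * toConv g) a := by
  rw [convMul_apply_of_comul_eq (comul_algEquiv_pow_apply hτ n a), ← Module.End.one_eq_id,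
    one_pow, AlgEquiv.pow_toLinearMap]
  rfl

theorem convMul_comp_algEquiv_pow_left_eq_right {κ : Module.End k A}
    (hτ₁ : ∀ a, comul (R := k) (τ a) = TensorProduct.map τ.toLinearMap LinearMap.id (comul a))
    (hτ₂ : ∀ a, comul (R := k) (τ a) = TensorProduct.map κ τ.toLinearMap (comul a))
    {f : A →ₗ[k] R} (hf : f ∘ₗ κ = f) (g : A →ₗ[k] R) (n : ℕ) (a : A) :
    (toConv (f ∘ₗ (τ ^ n).toLinearMap) * toConv g) a =
      (toConv f * toConv (g ∘ₗ (τ ^ n).toLinearMap)) a := by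
  have hfn : f ∘ₗ κ ^ n = f := by
    induction n with
    | zero => rfl
    | succ n ih => rw [pow_succ, Module.End.mul_eq_comp, ← LinearMap.comp_assoc, ih, hf]
  rw [← convMul_apply_algEquiv_pow hτ₁,
    convMul_apply_of_comul_eq (comul_algEquiv_pow_apply hτ₂ n a), hfn, AlgEquiv.pow_toLinearMap]

end Twisting

namespace PartialAction

variable {k A R : Type*} [CommSemiring k] [Semiring A] [Bialgebra k A] [Semiring R] [Algebra k R]
  (P : PartialAction k A R) {τ : A ≃ₐ[k] A} {g : Aˣ}

theorem act_mul_eq_convMul (h : A) (r s : R) :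
    P.act h (r * s) = (toConv (P.act.flip r) * toConv (P.act.flip s)) h := by
  rw [P.mul_act, lift_mul_compl₁₂_comul_eq_convMul]

theorem act_act_eq_convMul (h m : A) (r : R) :
    P.act h (P.act m r) =
      (toConv (P.act.flip 1) * toConv (P.act.flip r ∘ₗ LinearMap.mulRight k m)) h := by
  rw [P.act_act, lift_mul_compl₁₂_comul_eq_convMul]

theorem act_eq_convMul (h : A) (r : R) :
    P.act h r = (toConv (P.act.flip 1) * toConv (P.act.flip r)) h := by
  conv_lhs => rw [← P.unit_act r]
  rw [act_act_eq_convMul, LinearMap.mulRight_one, LinearMap.comp_id]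

theorem act_zpow_mul (hg : ∀ (a : A) (r : R), P.act (g * a) r = P.act (a * g) r)
    (n : ℤ) (a : A) (r : R) : P.act (↑(g ^ n) * a) r = P.act (a * ↑(g ^ n)) r :=
  Units.apply_zpow_mul_eq_apply_mul_zpow (fun x => P.act x r) g (fun x => hg x r) n a

theorem act_inv_mul_mul (hg : ∀ (a : A) (r : R), P.act (g * a) r = P.act (a * g) r)
    (a : A) (r : R) : P.act (↑g⁻¹ * a * g) r = P.act a r := by
  rw [← hg, ← mul_assoc, Units.mul_inv, one_mul]

theorem act_pow_eq_of_act_eq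
    (hτ : ∀ a, comul (R := k) (τ a) = TensorProduct.map τ.toLinearMap LinearMap.id (comul a))
    {w : R} (hw : w ∈ Set.center R) (haw : ∀ a : A, P.act a w = P.act (τ a) 1 * w)
    (a : A) (n : ℕ) : P.act a (w ^ n) = P.act ((τ ^ n) a) 1 * w ^ n := by
  induction n generalizing a with
  | zero => simp
  | succ n ih =>
    have hflip : P.act.flip (w ^ n) =
        LinearMap.mulRight k (w ^ n) ∘ₗ P.act.flip 1 ∘ₗ (τ ^ n).toLinearMap :=
      LinearMap.ext fun b => by simp [ih]
    calc P.act a (w ^ (n + 1))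
        = (toConv (P.act.flip (w ^ n)) * toConv (P.act.flip w)) a := by
          rw [pow_succ, act_mul_eq_convMul]
      _ = P.act ((τ ^ n) a) w * w ^ n := by
          rw [hflip, convMul_mulRight_comp_left _ _ ((Submonoid.center R).pow_mem hw n),
            ← convMul_apply_algEquiv_pow hτ, ← act_eq_convMul]
      _ = P.act ((τ ^ (n + 1)) a) 1 * w ^ (n + 1) := by
          rw [haw, mul_assoc, ← pow_succ', pow_succ' τ, AlgEquiv.mul_apply]

theorem convMul_act_one_comp_pow
    (hτ : ∀ a, comul (R := k) (τ a) = TensorProduct.map τ.toLinearMap LinearMap.id (comul a))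
    (n : ℕ) (m a : A) (r : R) :
    (toConv (P.act.flip 1 ∘ₗ (τ ^ n).toLinearMap) *
        toConv (P.act.flip r ∘ₗ LinearMap.mulRight k m)) a = P.act ((τ ^ n) a) (P.act m r) := by
  rw [← convMul_apply_algEquiv_pow hτ, act_act_eq_convMul]

theorem convMul_act_comp_pow
    (hτ₁ : ∀ a, comul (R := k) (τ a) = TensorProduct.map τ.toLinearMap LinearMap.id (comul a))
    (hτ₂ : ∀ a, comul (R := k) (τ a) = TensorProduct.map
      ((LinearMap.mulLeft k (↑g⁻¹ : A)).comp (LinearMap.mulRight k (g : A))) τ.toLinearMap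
      (comul a))
    (hg : ∀ (a : A) (r : R), P.act (g * a) r = P.act (a * g) r) (n : ℕ) (m a : A) (r : R) :
    (toConv (P.act.flip 1) *
        toConv ((P.act.flip r ∘ₗ LinearMap.mulRight k m) ∘ₗ (τ ^ n).toLinearMap)) a =
      P.act ((τ ^ n) a) (P.act m r) := by
  have hconj : P.act.flip 1 ∘ₗ (LinearMap.mulLeft k (↑g⁻¹ : A)).comp (LinearMap.mulRight k g) =
      P.act.flip 1 :=
    LinearMap.ext fun x => by simp [← mul_assoc, P.act_inv_mul_mul hg]
  rw [← convMul_comp_algEquiv_pow_left_eq_right hτ₁ hτ₂ hconj, P.convMul_act_one_comp_pow hτ₁]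

section Symmetric

variable {P}

theorem IsSymmetric.act_act_eq_convMul (hP : P.IsSymmetric) (h m : A) (r : R) :
    P.act h (P.act m r) =
      (toConv (P.act.flip r ∘ₗ LinearMap.mulRight k m) * toConv (P.act.flip 1)) h := by
  rw [hP, lift_mul_compl₁₂_comul_eq_convMul]

theorem IsSymmetric.convMul_act_comp_pow (hP : P.IsSymmetric)
    (hτ : ∀ a, comul (R := k) (τ a) = TensorProduct.map τ.toLinearMap LinearMap.id (comul a))
    (n : ℕ) (m a : A) (r : R) :
    (toConv ((P.act.flip r ∘ₗ LinearMap.mulRight k m) ∘ₗ (τ ^ n).toLinearMap) *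
        toConv (P.act.flip 1)) a = P.act ((τ ^ n) a) (P.act m r) := by
  rw [← convMul_apply_algEquiv_pow hτ, hP.act_act_eq_convMul]

/-- Pulling one `τ` out of the right factor conjugates the left one by `g`, which `hg` absorbs. -/
theorem IsSymmetric.convMul_act_one_comp_pow (hP : P.IsSymmetric)
    (hτ : ∀ a, comul (R := k) (τ a) = TensorProduct.map
      ((LinearMap.mulLeft k (↑g⁻¹ : A)).comp (LinearMap.mulRight k (g : A))) τ.toLinearMap
      (comul a))
    (hg : ∀ (a : A) (r : R), P.act (g * a) r = P.act (a * g) r) (n : ℕ) (m a : A) (r : R) :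
    (toConv (P.act.flip r ∘ₗ LinearMap.mulRight k m) *
        toConv (P.act.flip 1 ∘ₗ (τ ^ n).toLinearMap)) a = P.act ((τ ^ n) a) (P.act m r) := by
  induction n generalizing m a with
  | zero =>
    rw [pow_zero, AlgEquiv.one_toLinearMap, Module.End.one_eq_id, LinearMap.comp_id,
      hP.act_act_eq_convMul]
    rfl
  | succ n ih =>
    have hm : P.act.flip r ∘ₗ LinearMap.mulRight k m =
        (P.act.flip r ∘ₗ LinearMap.mulRight k (↑g⁻¹ * m * g)) ∘ₗ
          (LinearMap.mulLeft k (↑g⁻¹ : A)).comp (LinearMap.mulRight k g) :=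
      LinearMap.ext fun x => by
        simp only [LinearMap.comp_apply, LinearMap.mulLeft_apply, LinearMap.mulRight_apply,
          LinearMap.flip_apply, ← mul_assoc, Units.mul_inv_cancel_right]
        rw [mul_assoc _ x m, P.act_inv_mul_mul hg]
    have hpow : (τ ^ (n + 1)).toLinearMap = (τ ^ n).toLinearMap ∘ₗ τ.toLinearMap := by
      rw [pow_succ]; rfl
    rw [hm, hpow, ← LinearMap.comp_assoc τ.toLinearMap, ← convMul_apply_of_comul_eq (hτ a), ih,
      P.act_inv_mul_mul hg, pow_succ]
    rfl

end Symmetric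

end PartialAction

theorem stmt14_general {k A R : Type*} [Field k]
    [Ring A] [HopfAlgebra k A] [Ring R] [Algebra k R]
    (P : PartialAction k A R)
    (gu : Aˣ)
    (τ : A ≃ₐ[k] A)
    (hτ1 : ∀ a : A, Coalgebra.comul (R := k) (τ a) =
      TensorProduct.map τ.toLinearMap LinearMap.id (Coalgebra.comul (R := k) a))
    (hτ2 : ∀ a : A, Coalgebra.comul (R := k) (τ a) =
      TensorProduct.map
        ((LinearMap.mulLeft k ((gu⁻¹ : Aˣ) : A)).comp (LinearMap.mulRight k (gu : A)))
        τ.toLinearMap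
        (Coalgebra.comul (R := k) a))
    (w : R) (hw : w ∈ Set.center R)
    (haw : ∀ a : A, P.act a w = P.act (τ a) 1 * w) :
    (∀ (a : A) (j : ℕ), P.act a (w ^ j) = P.act ((τ ^ j : A ≃ₐ[k] A) a) 1 * w ^ j) ∧
    ((∀ (a : A) (r : R), P.act ((gu : A) * a) r = P.act (a * (gu : A)) r) →
      ∀ (a b : A) (r : R) (j : ℕ) (kz : ℤ),
        TensorProduct.lift ((LinearMap.mul k R).compl₁₂
            (P.act.flip (w ^ j))
            ((P.act.flip r).comp (LinearMap.mulRight k (((gu ^ kz : Aˣ) : A) * b))))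
          (Coalgebra.comul (R := k) a) =
        TensorProduct.lift ((LinearMap.mul k R).compl₁₂
            (P.act.flip 1)
            ((LinearMap.mulRight k (w ^ j)).comp
              ((P.act.flip r).comp
                ((LinearMap.mulRight k b).comp
                  ((LinearMap.mulLeft k ((gu ^ kz : Aˣ) : A)).comp
                    (τ ^ j : A ≃ₐ[k] A).toLinearMap)))))
          (Coalgebra.comul (R := k) a)) ∧
    ((∀ (a : A) (r : R), P.act ((gu : A) * a) r = P.act (a * (gu : A)) r) →
      P.IsSymmetric →
      ∀ (a b : A) (r : R) (j : ℕ) (kz : ℤ),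
        TensorProduct.lift ((LinearMap.mul k R).compl₁₂
            ((P.act.flip r).comp (LinearMap.mulRight k (((gu ^ kz : Aˣ) : A) * b)))
            (P.act.flip (w ^ j)))
          (Coalgebra.comul (R := k) a) =
        TensorProduct.lift ((LinearMap.mul k R).compl₁₂
            ((P.act.flip r).comp
              ((LinearMap.mulRight k b).comp
                ((LinearMap.mulLeft k ((gu ^ kz : Aˣ) : A)).comp
                  (τ ^ j : A ≃ₐ[k] A).toLinearMap)))
            ((LinearMap.mulRight k (w ^ j)).comp (P.act.flip 1)))
          (Coalgebra.comul (R := k) a)) := by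
  have hflip (j : ℕ) : P.act.flip (w ^ j) =
      LinearMap.mulRight k (w ^ j) ∘ₗ P.act.flip 1 ∘ₗ (τ ^ j).toLinearMap :=
    LinearMap.ext fun a => by simp [P.act_pow_eq_of_act_eq hτ1 hw haw]
  have hwj (j : ℕ) : w ^ j ∈ Set.center R := (Submonoid.center R).pow_mem hw j
  have hshift (hcomm : ∀ (a : A) (r : R), P.act (gu * a) r = P.act (a * gu) r) (b : A) (r : R)
      (j : ℕ) (kz : ℤ) :
      (P.act.flip r).comp ((LinearMap.mulRight k b).comp
          ((LinearMap.mulLeft k ((gu ^ kz : Aˣ) : A)).comp (τ ^ j).toLinearMap)) =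
        (P.act.flip r ∘ₗ LinearMap.mulRight k (b * ↑(gu ^ kz))) ∘ₗ (τ ^ j).toLinearMap :=
    LinearMap.ext fun a => by simp [mul_assoc, P.act_zpow_mul hcomm]
  refine ⟨P.act_pow_eq_of_act_eq hτ1 hw haw, fun hcomm a b r j kz => ?_,
    fun hcomm hP a b r j kz => ?_⟩
  · rw [lift_mul_compl₁₂_comul_eq_convMul, lift_mul_compl₁₂_comul_eq_convMul, hflip, hshift hcomm,
      convMul_mulRight_comp_left _ _ (hwj j), convMul_mulRight_comp_right,
      P.convMul_act_one_comp_pow hτ1, P.convMul_act_comp_pow hτ1 hτ2 hcomm, P.act_zpow_mul hcomm]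
  · rw [lift_mul_compl₁₂_comul_eq_convMul, lift_mul_compl₁₂_comul_eq_convMul, hflip, hshift hcomm,
      convMul_mulRight_comp_right, convMul_mulRight_comp_right,
      hP.convMul_act_one_comp_pow hτ2 hcomm, hP.convMul_act_comp_pow hτ1, P.act_zpow_mul hcomm]

/-- Lemma 4.2: let `g` be an invertible grouplike with `g · 1_R = 0`, and
`τ` an algebra automorphism (playing the role of `σ⁻¹`) with `Δ(τ(a)) = Σ τ(a₁) ⊗ a₂` and
`Δ(τ(a)) = Σ g⁻¹a₁g ⊗ τ(a₂)`, and let `w ∈ Z(R)` satisfy `a · w = (τ(a) · 1_R) w`. Then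
(i) `a · wʲ = (τʲ(a) · 1_R) wʲ`;
(ii) if `ga · r = ag · r` then `Σ (a₁·wʲ)((a₂gᵏb)·r) = Σ (a₁·1)((gᵏτʲ(a₂)b)·r) wʲ`;
(iii) if moreover the action is symmetric then
`Σ ((a₁gᵏb)·r)(a₂·wʲ) = Σ ((gᵏτʲ(a₁)b)·r)(a₂·1) wʲ`. -/
theorem stmt14 {k A R : Type*} [Field k] [IsAlgClosed k] [CharZero k]
    [Ring A] [HopfAlgebra k A] [Ring R] [Algebra k R]
    (P : PartialAction k A R)
    (gu : Aˣ) (hg : IsGrouplike k (gu : A)) (hg0 : P.act (gu : A) 1 = 0)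
    (τ : A ≃ₐ[k] A)
    (hτ1 : ∀ a : A, Coalgebra.comul (R := k) (τ a) =
      TensorProduct.map τ.toLinearMap LinearMap.id (Coalgebra.comul (R := k) a))
    (hτ2 : ∀ a : A, Coalgebra.comul (R := k) (τ a) =
      TensorProduct.map
        ((LinearMap.mulLeft k ((gu⁻¹ : Aˣ) : A)).comp (LinearMap.mulRight k (gu : A)))
        τ.toLinearMap
        (Coalgebra.comul (R := k) a))
    (w : R) (hw : w ∈ Set.center R)
    (haw : ∀ a : A, P.act a w = P.act (τ a) 1 * w) :
    (∀ (a : A) (j : ℕ), P.act a (w ^ j) = P.act ((τ ^ j : A ≃ₐ[k] A) a) 1 * w ^ j) ∧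
    ((∀ (a : A) (r : R), P.act ((gu : A) * a) r = P.act (a * (gu : A)) r) →
      ∀ (a b : A) (r : R) (j : ℕ) (kz : ℤ),
        TensorProduct.lift ((LinearMap.mul k R).compl₁₂
            (P.act.flip (w ^ j))
            ((P.act.flip r).comp (LinearMap.mulRight k (((gu ^ kz : Aˣ) : A) * b))))
          (Coalgebra.comul (R := k) a) =
        TensorProduct.lift ((LinearMap.mul k R).compl₁₂
            (P.act.flip 1)
            ((LinearMap.mulRight k (w ^ j)).comp
              ((P.act.flip r).comp
                ((LinearMap.mulRight k b).comp
                  ((LinearMap.mulLeft k ((gu ^ kz : Aˣ) : A)).comp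
                    (τ ^ j : A ≃ₐ[k] A).toLinearMap)))))
          (Coalgebra.comul (R := k) a)) ∧
    ((∀ (a : A) (r : R), P.act ((gu : A) * a) r = P.act (a * (gu : A)) r) →
      P.IsSymmetric →
      ∀ (a b : A) (r : R) (j : ℕ) (kz : ℤ),
        TensorProduct.lift ((LinearMap.mul k R).compl₁₂
            ((P.act.flip r).comp (LinearMap.mulRight k (((gu ^ kz : Aˣ) : A) * b)))
            (P.act.flip (w ^ j)))
          (Coalgebra.comul (R := k) a) =
        TensorProduct.lift ((LinearMap.mul k R).compl₁₂
            ((P.act.flip r).comp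
              ((LinearMap.mulRight k b).comp
                ((LinearMap.mulLeft k ((gu ^ kz : Aˣ) : A)).comp
                  (τ ^ j : A ≃ₐ[k] A).toLinearMap)))
            ((LinearMap.mulRight k (w ^ j)).comp (P.act.flip 1)))
          (Coalgebra.comul (R := k) a)) :=
  stmt14_general P gu τ hτ1 hτ2 w hw haw
end
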